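/- arXiv:2512.10686 — 6 statements merged into one kernel-verified Lean document; each statement's English description precedes it below -/
import Mathlib

section
/- Let S be a nonnegative symmetric purely atomic Borel measure on ℝ^d (there is a countable set D ⊆ ℝ^d with S(ℝ^d ∖ D) = 0) with ∫_{ℝ^d}(1+‖u‖)^{−d−1} dS(u) < ∞. Let B ⊆ ℝ^d be any cone with nonempty interior, i.e. a set with λB ⊆ B for all λ > 0 whose topological interior is nonempty. Then S is perfectly interpolable from B; that is, S induces linear maximal rigidity on Bᶜ. -/
open MeasureTheory Complex
open scoped RealInnerProductSpace Pointwise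

noncomputable section

abbrev Ed (d : ℕ) := EuclideanSpace ℝ (Fin d)

/-- Fourier transform `f̂(u) = ∫ e^{-i⟨u,x⟩} f(x) dx`. -/
def FT {d : ℕ} (f : Ed d → ℂ) (u : Ed d) : ℂ :=
  ∫ x : Ed d, Complex.exp (-Complex.I * (⟪u, x⟫ : ℝ)) * f x

/-- `f` is bounded, measurable, with bounded support contained in `A`. -/
def IsCBS {d : ℕ} (A : Set (Ed d)) (f : Ed d → ℂ) : Prop :=
  Measurable f ∧ (∃ C : ℝ, ∀ x, ‖f x‖ ≤ C) ∧
    Bornology.IsBounded (Function.support f) ∧ Function.support f ⊆ A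

/-- `S` induces linear maximal rigidity on `A`. -/
def LMR {d : ℕ} (S : Measure (Ed d)) (A : Set (Ed d)) : Prop :=
  ∀ f : Ed d → ℂ, IsCBS A f → ∀ ε : ℝ, 0 < ε →
    ∃ h : Ed d → ℂ, IsCBS Aᶜ h ∧ (∫ u, ‖FT f u - FT h u‖ ^ 2 ∂S) < ε

/-!
Translating `f` by `v` multiplies `FT f` by the phase `exp (-i⟪u, v⟫)`. By recurrence in the
compact group `Circle ^ D`, there are integers `m n → ∞` with `exp (-i m n ⟪u, x₀⟫) → 1` at
every atom `u ∈ D`. For `x₀` interior to the cone `B`, the translates of `f` by `m n • x₀`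
eventually have support in `B`, and dominated convergence gives
`∫ ‖FT f - FT (f (· - m n • x₀))‖² dS → 0`.
-/

open Filter Topology

theorem exists_tendsto_atTop_pow_tendsto_one {G : Type*} [CommGroup G] [TopologicalSpace G]
    [IsTopologicalGroup G] [CompactSpace G] [FirstCountableTopology G] (y : G) :
    ∃ m : ℕ → ℕ, Tendsto m atTop atTop ∧ Tendsto (fun n => y ^ m n) atTop (𝓝 1) := by
  obtain ⟨a, -, φ, hφ, hlim⟩ :=
    isCompact_univ.tendsto_subseq (x := fun n : ℕ => y ^ n) (fun _ => Set.mem_univ _)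
  have hlim₂ : Tendsto (fun n => y ^ φ (n + n)) atTop (𝓝 a) :=
    hlim.comp (strictMono_id.add strictMono_id).tendsto_atTop
  refine ⟨fun n => φ (n + n) - φ n, tendsto_atTop_mono (fun n => ?_) tendsto_id, ?_⟩
  · have := hφ.add_le_nat n n
    simp only [id]
    omega
  · have hpow : ∀ n, y ^ (φ (n + n) - φ n) = y ^ φ (n + n) * (y ^ φ n)⁻¹ := fun n =>
      pow_sub y (hφ.monotone (Nat.le_add_left n n))
    simpa only [hpow, mul_inv_cancel, Function.comp_def] using hlim₂.mul hlim.inv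

theorem eventually_smul_vadd_subset_of_isCone {E : Type*} [NormedAddCommGroup E]
    [NormedSpace ℝ E] {B K : Set E} (hB : ∀ c : ℝ, 0 < c → c • B ⊆ B) {x₀ : E}
    (hx₀ : x₀ ∈ interior B) (hK : Bornology.IsBounded K) : ∀ᶠ c : ℝ in atTop, c • x₀ +ᵥ K ⊆ B := by
  obtain ⟨r, hr, hball⟩ := Metric.isOpen_iff.mp isOpen_interior x₀ hx₀
  obtain ⟨R, hR, hKR⟩ := hK.subset_ball_lt 0 0
  filter_upwards [eventually_gt_atTop (R / r)] with c hc
  have hc₀ : 0 < c := (div_pos hR hr).trans hc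
  have hcr : R < c * r := (div_lt_iff₀ hr).mp hc
  have hballc : Metric.ball (c • x₀) (c * r) ⊆ B := by
    have h := smul_ball hc₀.ne' x₀ r
    rw [Real.norm_of_nonneg hc₀.le] at h
    rw [← h]
    exact (Set.smul_set_mono (hball.trans interior_subset)).trans (hB c hc₀)
  rintro _ ⟨y, hy, rfl⟩
  apply hballc
  change c • x₀ + y ∈ _
  have hy' := hKR hy
  rw [mem_ball_zero_iff] at hy'
  rw [Metric.mem_ball, dist_eq_norm, add_sub_cancel_left]
  exact hy'.trans hcr

theorem tendsto_integral_norm_sub_mul_sq {α : Type*} [MeasurableSpace α] {μ : Measure α}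
    {g : α → ℂ} {e : ℕ → α → ℂ} (hg : AEStronglyMeasurable g μ)
    (hg_sq : Integrable (fun u => ‖g u‖ ^ 2) μ) (he : ∀ n, AEStronglyMeasurable (e n) μ)
    (he_norm : ∀ n u, ‖e n u‖ ≤ 1)
    (he_lim : ∀ᵐ u ∂μ, Tendsto (fun n => e n u) atTop (𝓝 1)) :
    Tendsto (fun n => ∫ u, ‖g u - e n u * g u‖ ^ 2 ∂μ) atTop (𝓝 0) := by
  have hbound : ∀ n u, ‖g u - e n u * g u‖ ≤ 2 * ‖g u‖ := fun n u =>
    calc ‖g u - e n u * g u‖ ≤ ‖g u‖ + ‖e n u‖ * ‖g u‖ := by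
          simpa only [norm_mul] using norm_sub_le (g u) (e n u * g u)
      _ ≤ ‖g u‖ + 1 * ‖g u‖ := by gcongr; exact he_norm n u
      _ = 2 * ‖g u‖ := by ring
  have hlim := tendsto_integral_of_dominated_convergence (fun u => 4 * ‖g u‖ ^ 2)
    (F := fun n u => ‖g u - e n u * g u‖ ^ 2) (f := fun _ => 0)
    (fun n => ((hg.sub ((he n).mul hg)).norm).pow 2)
    (hg_sq.const_mul 4)
    (fun n => ae_of_all _ fun u => by
      rw [Real.norm_of_nonneg (by positivity)]
      nlinarith [hbound n u, norm_nonneg (g u - e n u * g u)])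
    (he_lim.mono fun u hu => by
      have := ((tendsto_const_nhds (x := g u)).sub
        (hu.mul (tendsto_const_nhds (x := g u)))).norm.pow 2
      simpa using this)
  simpa using hlim

section FourierTransform

variable {d : ℕ}

theorem FT_zero : FT (0 : Ed d → ℂ) = 0 := by
  ext u
  simp [FT]

theorem FT_comp_sub (f : Ed d → ℂ) (v u : Ed d) :
    FT (fun x => f (x - v)) u = Complex.exp (-Complex.I * (⟪u, v⟫ : ℝ)) * FT f u := by
  unfold FT
  rw [← integral_add_right_eq_self _ v, ← integral_const_mul]
  congr 1 with x
  simp only [add_sub_cancel_right]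
  rw [inner_add_right, Complex.ofReal_add, mul_add, Complex.exp_add]
  ring

theorem stronglyMeasurable_FT {f : Ed d → ℂ} (hf : Measurable f) :
    StronglyMeasurable (FT f) := by
  refine StronglyMeasurable.integral_prod_right' (f := fun p : Ed d × Ed d =>
    Complex.exp (-Complex.I * (⟪p.1, p.2⟫ : ℝ)) * f p.2) (Measurable.stronglyMeasurable ?_)
  exact (Complex.measurable_exp.comp (measurable_const.mul
    (Complex.measurable_ofReal.comp continuous_inner.measurable))).mul (hf.comp measurable_snd)

theorem isCBS_zero (A : Set (Ed d)) : IsCBS A 0 :=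
  ⟨measurable_const, ⟨0, fun _ => by simp⟩, by simp, by simp⟩

theorem IsCBS.comp_sub {A A' : Set (Ed d)} {f : Ed d → ℂ} (hf : IsCBS A f) (v : Ed d)
    (hv : v +ᵥ Function.support f ⊆ A') : IsCBS A' (fun x => f (x - v)) := by
  obtain ⟨hfm, ⟨C, hC⟩, hfb, -⟩ := hf
  have hsupp : Function.support (fun x => f (x - v)) = v +ᵥ Function.support f := by
    ext x
    simp [Set.mem_vadd_set_iff_neg_vadd_mem, neg_add_eq_sub]
  exact ⟨hfm.comp (measurable_sub_const v), ⟨C, fun x => hC _⟩, hsupp ▸ hfb.vadd v, hsupp ▸ hv⟩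

end FourierTransform

theorem exists_tendsto_atTop_phase_tendsto_one {E : Type*} [NormedAddCommGroup E]
    [InnerProductSpace ℝ E] {D : Set E} (hD : D.Countable) (x₀ : E) :
    ∃ m : ℕ → ℕ, Tendsto m atTop atTop ∧ ∀ u ∈ D,
      Tendsto (fun n => Complex.exp (-Complex.I * (⟪u, (m n : ℝ) • x₀⟫ : ℝ))) atTop (𝓝 1) := by
  have : Countable D := hD.to_subtype
  obtain ⟨m, hm, hlim⟩ :=
    exists_tendsto_atTop_pow_tendsto_one (fun u : D => Circle.exp (-⟪(u : E), x₀⟫))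
  refine ⟨m, hm, fun u hu => ?_⟩
  have hu_lim : Tendsto (fun n => ((Circle.exp (-⟪u, x₀⟫) ^ m n : Circle) : ℂ)) atTop (𝓝 1) :=
    (continuous_subtype_val.tendsto 1).comp (tendsto_pi_nhds.mp hlim ⟨u, hu⟩)
  refine hu_lim.congr fun n => ?_
  rw [← Circle.exp_nsmul, Circle.coe_exp, real_inner_smul_right, nsmul_eq_mul]
  push_cast
  ring_nf

theorem atomic_spectrum_interpolable_from_cone_general {d : ℕ}
    (S : Measure (Ed d))
    (hatomic : ∃ D : Set (Ed d), D.Countable ∧ S Dᶜ = 0)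
    (B : Set (Ed d))
    (hBcone : ∀ c : ℝ, 0 < c → c • B ⊆ B)
    (hBint : (interior B).Nonempty) :
    LMR S Bᶜ := by
  intro f hf ε hε
  by_cases hI : Integrable (fun u => ‖FT f u‖ ^ 2) S
  swap
  · -- the Bochner integral of a non-integrable function is `0`
    exact ⟨0, isCBS_zero _, by simpa [FT_zero, integral_undef hI] using hε⟩
  obtain ⟨D, hD, hSD⟩ := hatomic
  obtain ⟨x₀, hx₀⟩ := hBint
  obtain ⟨m, hm, hphase⟩ := exists_tendsto_atTop_phase_tendsto_one hD x₀
  have hcone : ∀ᶠ n in atTop, (m n : ℝ) • x₀ +ᵥ Function.support f ⊆ B :=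
    (tendsto_natCast_atTop_atTop.comp hm).eventually
      (eventually_smul_vadd_subset_of_isCone hBcone hx₀ hf.2.2.1)
  have hsmall : ∀ᶠ n in atTop,
      ∫ u, ‖FT f u - FT (fun x => f (x - (m n : ℝ) • x₀)) u‖ ^ 2 ∂S < ε := by
    simp only [FT_comp_sub]
    refine (tendsto_integral_norm_sub_mul_sq (stronglyMeasurable_FT hf.1).aestronglyMeasurable
      hI (fun n => (by fun_prop : Continuous _).aestronglyMeasurable) (fun n u => ?_)
      ?_).eventually (gt_mem_nhds hε)
    · rw [Complex.norm_exp]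
      simp
    · filter_upwards [measure_eq_zero_iff_ae_notMem.mp hSD] with u hu
      exact hphase u (by simpa using hu)
  obtain ⟨n, hn_cone, hn_small⟩ := (hcone.and hsmall).exists
  exact ⟨_, hf.comp_sub _ (by rwa [compl_compl]), hn_small⟩

/-- Theorem 5 (quasicrystals): a symmetric purely atomic measure `S` on `ℝ^d` with
`∫ (1+‖u‖)^{-d-1} dS < ∞` is perfectly interpolable from any cone `B` with nonempty
interior, i.e. it induces linear maximal rigidity on `Bᶜ`. -/
theorem atomic_spectrum_interpolable_from_cone {d : ℕ}
    (S : Measure (Ed d))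
    (hsymm : Measure.map (fun u : Ed d => -u) S = S)
    (hatomic : ∃ D : Set (Ed d), D.Countable ∧ S Dᶜ = 0)
    (hint : (∫⁻ u, ENNReal.ofReal (((1 + ‖u‖) ^ (d + 1))⁻¹) ∂S) < ⊤)
    (B : Set (Ed d))
    (hBcone : ∀ c : ℝ, 0 < c → c • B ⊆ B)
    (hBint : (interior B).Nonempty) :
    LMR S Bᶜ :=
  atomic_spectrum_interpolable_from_cone_general S hatomic B hBcone hBint
end
end

section
/- Let S' be a finite nonnegative purely atomic Borel measure on the unit torus 𝕋^d = {u ∈ ℂ^d : |u_i| = 1 for all i} (there is a countable set D ⊆ 𝕋^d with S'(𝕋^d ∖ D) = 0). Let φ ∈ L²(S') satisfy ∫_{𝕋^d} φ(u)·u^m dS'(u) = 0 for every m ∈ ℕ^d with all coordinates nonnegative, where u^m = ∏_{i=1}^d u_i^{m_i}. Then φ = 0 S'-almost everywhere. -/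
/-!
Fix an atom `a`. The analytic polynomials
`∏ i, N⁻¹ ∑_{k<N} ((a i)⁻¹ u i)^k` are bounded by `1` on the torus and, being products of Cesàro
means of geometric sequences, converge pointwise to the indicator of `{a}`. Orthogonality makes
`∫ φ` against each of them vanish, so by dominated convergence `S'{a} φ(a) = 0`. As `S'` lives on
countably many atoms, `φ = 0` almost everywhere.
-/

open MeasureTheory Complex

noncomputable section

instance : MeasurableSpace Circle := borel Circle
instance : BorelSpace Circle := ⟨rfl⟩

open Filter Topology Finset

section CesaroMean

variable {𝕜 : Type*} [RCLike 𝕜]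

lemma norm_inv_natCast_mul_geom_sum_le_one {z : 𝕜} (hz : ‖z‖ ≤ 1) (N : ℕ) :
    ‖(N : 𝕜)⁻¹ * ∑ k ∈ range N, z ^ k‖ ≤ 1 := by
  rcases N.eq_zero_or_pos with rfl | hN
  · simp
  calc ‖(N : 𝕜)⁻¹ * ∑ k ∈ range N, z ^ k‖
      ≤ (N : ℝ)⁻¹ * ∑ k ∈ range N, ‖z‖ ^ k := by
        rw [norm_mul, norm_inv, RCLike.norm_natCast]
        gcongr
        exact (norm_sum_le _ _).trans_eq (by simp only [norm_pow])
    _ ≤ (N : ℝ)⁻¹ * ∑ _k ∈ range N, 1 := by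
        gcongr with k
        exact pow_le_one₀ (norm_nonneg z) hz
    _ = 1 := by simp [hN.ne']

lemma tendsto_inv_natCast_mul_geom_sum {z : 𝕜} (hz : ‖z‖ ≤ 1) :
    Tendsto (fun N : ℕ => (N : 𝕜)⁻¹ * ∑ k ∈ range N, z ^ k) atTop
      (𝓝 (if z = 1 then 1 else 0)) := by
  split_ifs with h1
  · refine tendsto_const_nhds.congr' ?_
    filter_upwards [eventually_ne_atTop 0] with N hN
    simp [h1, hN]
  · refine squeeze_zero_norm (a := fun N : ℕ => (N : ℝ)⁻¹ * (2 / ‖z - 1‖)) (fun N => ?_) ?_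
    · rw [geom_sum_eq h1, norm_mul, norm_inv, RCLike.norm_natCast, norm_div]
      gcongr
      calc ‖z ^ N - 1‖ ≤ ‖z ^ N‖ + ‖(1 : 𝕜)‖ := norm_sub_le _ _
        _ ≤ 1 + 1 := by
          gcongr
          · exact (norm_pow_le _ _).trans (pow_le_one₀ (norm_nonneg z) hz)
          · simp
        _ = 2 := by norm_num
    · simpa using tendsto_inv_atTop_nhds_zero_nat.mul_const (2 / ‖z - 1‖)

end CesaroMean

section TorusPeak

variable {ι : Type*} [Fintype ι]

def cesaroPeak (a : ι → Circle) (N : ℕ) (u : ι → Circle) : ℂ :=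
  ∏ i, (N : ℂ)⁻¹ * ∑ k ∈ range N, ((a i : ℂ)⁻¹ * u i) ^ k

lemma continuous_cesaroPeak (a : ι → Circle) (N : ℕ) : Continuous (cesaroPeak a N) := by
  unfold cesaroPeak
  fun_prop

lemma norm_inv_coe_mul_coe (a u : Circle) : ‖(a : ℂ)⁻¹ * u‖ = 1 := by
  simp [Circle.norm_coe]

lemma norm_cesaroPeak_le_one (a : ι → Circle) (N : ℕ) (u : ι → Circle) :
    ‖cesaroPeak a N u‖ ≤ 1 := by
  rw [cesaroPeak, norm_prod]
  exact prod_le_one (fun _ _ => norm_nonneg _) fun i _ =>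
    norm_inv_natCast_mul_geom_sum_le_one (norm_inv_coe_mul_coe _ _).le N

lemma tendsto_cesaroPeak (a u : ι → Circle) :
    Tendsto (fun N => cesaroPeak a N u) atTop (𝓝 (({a} : Set (ι → Circle)).indicator 1 u)) := by
  have hlim := tendsto_finsetProd univ fun i _ =>
    tendsto_inv_natCast_mul_geom_sum (norm_inv_coe_mul_coe (a i) (u i)).le
  convert hlim using 2 with N
  · rfl
  · classical
    simp [Set.indicator_apply, funext_iff, inv_mul_eq_one₀, Circle.coe_inj, prod_boole, eq_comm]

lemma cesaroPeak_eq_sum_monomial [DecidableEq ι] (a : ι → Circle) (N : ℕ) (u : ι → Circle) :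
    cesaroPeak a N u = ∑ m ∈ Fintype.piFinset fun _ => range N,
      (∏ i, (N : ℂ)⁻¹ * (a i : ℂ)⁻¹ ^ m i) * ∏ i, (u i : ℂ) ^ m i := by
  simp only [cesaroPeak, mul_sum, prod_univ_sum, ← prod_mul_distrib, mul_pow, mul_assoc]

end TorusPeak

section Orthogonal

variable {ι : Type*} [Fintype ι] {μ : Measure (ι → Circle)} {φ : (ι → Circle) → ℂ}

lemma integrable_mul_monomial (hφ : Integrable φ μ) (m : ι → ℕ) :
    Integrable (fun u => φ u * ∏ i, (u i : ℂ) ^ m i) μ := by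
  have hcont : Continuous fun u : ι → Circle => ∏ i, (u i : ℂ) ^ m i := by fun_prop
  exact hφ.mul_bdd hcont.aestronglyMeasurable
    (ae_of_all _ fun u => (by simp [norm_prod, Circle.norm_coe] : _ = (1 : ℝ)).le)

lemma integral_mul_cesaroPeak_eq_zero (hφ : Integrable φ μ)
    (horth : ∀ m : ι → ℕ, ∫ u, φ u * ∏ i, (u i : ℂ) ^ m i ∂μ = 0) (a : ι → Circle) (N : ℕ) :
    ∫ u, φ u * cesaroPeak a N u ∂μ = 0 := by
  classical
  simp_rw [cesaroPeak_eq_sum_monomial, mul_sum, mul_left_comm (φ _)]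
  rw [integral_finsetSum _ fun m _ => (integrable_mul_monomial hφ m).const_mul _]
  exact sum_eq_zero fun m _ => by rw [integral_const_mul, horth, mul_zero]

lemma integral_mul_indicator_singleton (a : ι → Circle) :
    ∫ u, φ u * ({a} : Set (ι → Circle)).indicator 1 u ∂μ = μ.real {a} * φ a := by
  simp_rw [← Set.indicator_mul_right, Pi.one_apply, mul_one]
  rw [integral_indicator (measurableSet_singleton a), integral_singleton, Complex.real_smul]

lemma measureReal_singleton_mul_eq_zero_of_orthogonal (hφ : Integrable φ μ)
    (horth : ∀ m : ι → ℕ, ∫ u, φ u * ∏ i, (u i : ℂ) ^ m i ∂μ = 0) (a : ι → Circle) :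
    μ.real {a} * φ a = 0 := by
  have hlim : Tendsto (fun N => ∫ u, φ u * cesaroPeak a N u ∂μ) atTop
      (𝓝 (∫ u, φ u * ({a} : Set (ι → Circle)).indicator 1 u ∂μ)) :=
    tendsto_integral_of_dominated_convergence (fun u => ‖φ u‖)
      (fun N => hφ.aestronglyMeasurable.mul (continuous_cesaroPeak a N).aestronglyMeasurable)
      hφ.norm
      (fun N => ae_of_all _ fun u => by
        rw [norm_mul]
        exact mul_le_of_le_one_right (norm_nonneg _) (norm_cesaroPeak_le_one a N u))
      (ae_of_all _ fun u => (tendsto_cesaroPeak a u).const_mul (φ u))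
  simp only [integral_mul_cesaroPeak_eq_zero hφ horth, integral_mul_indicator_singleton] at hlim
  exact tendsto_nhds_unique hlim tendsto_const_nhds

end Orthogonal

lemma ae_eq_zero_of_countable_of_forall_measure_singleton {α E : Type*} [MeasurableSpace α]
    [Zero E] {μ : Measure α} {f : α → E} {D : Set α} (hD : D.Countable) (hμD : μ Dᶜ = 0)
    (hf : ∀ a ∈ D, μ {a} ≠ 0 → f a = 0) : f =ᵐ[μ] 0 := by
  have hsub : {x | f x ≠ 0} ⊆ Dᶜ ∪ ⋃ a ∈ {a ∈ D | μ {a} = 0}, {a} := by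
    intro x hx
    by_cases hxD : x ∈ D
    · exact Or.inr (Set.mem_biUnion ⟨hxD, not_imp_comm.mp (hf x hxD) hx⟩ rfl)
    · exact Or.inl hxD
  refine measure_mono_null hsub (measure_union_null hμD ?_)
  exact (measure_biUnion_null_iff (hD.mono (Set.sep_subset _ _))).2 fun a ha => ha.2

/-- Lemma 2: for a finite purely atomic measure `S'` on the unit torus `𝕋^d`, any
`φ ∈ L²(S')` orthogonal to all monomials `u^m` with nonnegative exponents vanishes
`S'`-almost everywhere (density of analytic polynomials). -/
theorem atomic_torus_no_orthogonal {d : ℕ}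
    (S' : Measure (Fin d → Circle)) [IsFiniteMeasure S']
    (hatomic : ∃ D : Set (Fin d → Circle), D.Countable ∧ S' Dᶜ = 0)
    (φ : (Fin d → Circle) → ℂ) (hφ : MemLp φ 2 S')
    (horth : ∀ m : Fin d → ℕ,
      (∫ u, φ u * ∏ i, ((u i : ℂ) ^ (m i)) ∂S') = 0) :
    φ =ᵐ[S'] 0 := by
  obtain ⟨D, hD, hS'D⟩ := hatomic
  refine ae_eq_zero_of_countable_of_forall_measure_singleton hD hS'D fun a _ ha => ?_
  have hatom := measureReal_singleton_mul_eq_zero_of_orthogonal (hφ.integrable one_le_two) horth a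
  exact (mul_eq_zero.mp hatom).resolve_left
    (Complex.ofReal_ne_zero.mpr ((measureReal_ne_zero_iff (measure_ne_top _ _)).mpr ha))
end
end

section
/- Let d ≥ 1 and let I_1, …, I_d be nonempty open subsets of the unit circle 𝕋 = {z ∈ ℂ : |z| = 1}. Then for every ε > 0 there exist a finite set F ⊆ {m ∈ ℤ^d : m_i ≥ 1 for all i} and coefficients (h_m)_{m∈F} in ℂ such that sup_{z ∈ (𝕋∖I_1)×⋯×(𝕋∖I_d)} |1 − Σ_{m∈F} h_m z^m| ≤ ε, where z^m = ∏_{i=1}^d z_i^{m_i}. -/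
/-!
Truncating the series `∑_{k ≥ 1} u^k = u / (1 - u)` at `u = r z w̄` with `r < 1` gives a polynomial
`G` without constant term; since `Re (u / (1 - u)) = (Re u - |u|²) / |1 - u|²`, for `r` close to `1`
its real part is bounded above by a negative constant on the part of the circle at distance `≥ δ`
from `w`. Then `q = 1 + t G` satisfies `q(0) = 1` and `|q| ≤ σ < 1` there, so `P = 1 - q^N` has no
constant term and `|1 - P| = |q|^N` is as small as we like. For several variables, expanding
`∏ᵢ Pᵢ(zᵢ)` gives only monomials with all exponents positive, and `|1 - ∏ᵢ Pᵢ(zᵢ)| ≤ (1 + δ)^d - 1`.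
-/

open Complex Filter Finset Polynomial ComplexConjugate Topology

theorem prod_eval_eq_sum_piFinset_support {ι R : Type*} [Fintype ι] [DecidableEq ι]
    [CommSemiring R] (P : ι → R[X]) (z : ι → R) :
    ∏ i, (P i).eval (z i) =
      ∑ m ∈ Fintype.piFinset fun i => (P i).support, (∏ i, (P i).coeff (m i)) * ∏ i, z i ^ m i := by
  simp_rw [eval_eq_sum, Polynomial.sum_def, prod_univ_sum, ← prod_mul_distrib]

theorem norm_one_sub_prod_le {ι R : Type*} [NormedCommRing R] [NormOneClass R]
    (s : Finset ι) {a : ι → R} {δ : ℝ} (h : ∀ i ∈ s, ‖1 - a i‖ ≤ δ) :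
    ‖1 - ∏ i ∈ s, a i‖ ≤ (1 + δ) ^ #s - 1 := by
  induction s using Finset.cons_induction with
  | empty => simp
  | cons i s hi ih =>
    set P := ∏ j ∈ s, a j
    have hP := ih fun j hj => h j (mem_cons_of_mem hj)
    have hai := h i (mem_cons_self i s)
    have hPn : ‖P‖ ≤ (1 + δ) ^ #s := by
      calc ‖P‖ = ‖1 - (1 - P)‖ := by rw [sub_sub_cancel]
        _ ≤ 1 + ‖1 - P‖ := (norm_sub_le _ _).trans_eq (by rw [norm_one])
        _ ≤ _ := by linarith
    rw [prod_cons, card_cons, show 1 - a i * P = (1 - a i) * P + (1 - P) by ring]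
    calc _ ≤ ‖1 - a i‖ * ‖P‖ + ‖1 - P‖ := (norm_add_le _ _).trans (by gcongr; exact norm_mul_le _ _)
      _ ≤ δ * (1 + δ) ^ #s + ((1 + δ) ^ #s - 1) := by gcongr; exact (norm_nonneg _).trans hai
      _ = _ := by ring

theorem exists_pos_one_add_pow_sub_one_le (d : ℕ) {ε : ℝ} (hε : 0 < ε) :
    ∃ δ > 0, (1 + δ) ^ d - 1 ≤ ε := by
  have hcont : Continuous fun δ : ℝ => (1 + δ) ^ d - 1 := by fun_prop
  have hlim : Tendsto (fun δ : ℝ => (1 + δ) ^ d - 1) (𝓝[>] 0) (𝓝 0) := by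
    simpa using (hcont.tendsto 0).mono_left nhdsWithin_le_nhds
  obtain ⟨δ, hδε, hδ⟩ := ((hlim.eventually (ge_mem_nhds hε)).and self_mem_nhdsWithin).exists
  exact ⟨δ, hδ, hδε⟩

theorem norm_one_add_mul_le {G : ℂ} {c B : ℝ} (hc : 0 < c) (hre : G.re ≤ -c) (hG : ‖G‖ ≤ B) :
    ‖1 + (c / B ^ 2 : ℝ) * G‖ ≤ 1 - (c / B) ^ 2 / 2 := by
  have hcB : c ≤ B := by linarith [neg_le_of_abs_le (abs_re_le_norm G)]
  have hB : 0 < B := hc.trans_le hcB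
  set t := c / B ^ 2
  have hsq : ‖1 + (t : ℂ) * G‖ ^ 2 ≤ 1 - (c / B) ^ 2 := by
    have hexp : ‖1 + (t : ℂ) * G‖ ^ 2 = 1 + 2 * t * G.re + t ^ 2 * ‖G‖ ^ 2 := by
      rw [Complex.sq_norm, normSq_add, normSq_mul, normSq_ofReal, one_mul, conj_re, re_ofReal_mul,
        normSq_one, ← Complex.sq_norm]
      ring
    have h1 : t ^ 2 * ‖G‖ ^ 2 ≤ t ^ 2 * B ^ 2 := by gcongr
    have h2 : 2 * t * G.re ≤ 2 * t * -c := by gcongr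
    have h3 : t ^ 2 * B ^ 2 = (c / B) ^ 2 := by simp only [t]; field_simp
    have h4 : 2 * t * -c = -2 * (c / B) ^ 2 := by simp only [t]; field_simp
    linarith
  have h1 : (c / B) ^ 2 ≤ 1 := by rw [div_pow]; exact div_le_one_of_le₀ (by gcongr) (by positivity)
  nlinarith [norm_nonneg (1 + (t : ℂ) * G), sq_nonneg (c / B)]

theorem re_sum_pow_succ_le {r η : ℝ} {n : ℕ} {ζ : ℂ} (hr : 1 / 2 ≤ r) (hr1 : r < 1)
    (hn : r ^ n ≤ η / 8) (hζ : ‖ζ‖ = 1) (hre : ζ.re + η / 2 ≤ r) :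
    (∑ k ∈ range n, ((r : ℂ) * ζ) ^ (k + 1)).re ≤ -(η / 32) := by
  set u : ℂ := r * ζ
  set S := ∑ k ∈ range n, u ^ (k + 1)
  have hu : ‖u‖ = r := by rw [norm_mul, hζ, mul_one, norm_real, Real.norm_of_nonneg (by linarith)]
  have hS : S * (1 - u) = u - u ^ (n + 1) := by
    rw [show S = u * ∑ k ∈ range n, u ^ k by simp only [S, mul_sum, pow_succ'], mul_assoc,
      geom_sum_mul_neg]
    ring
  have h1u : ‖1 - u‖ ≤ 2 := (norm_sub_le _ _).trans (by rw [norm_one, hu]; linarith)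
  have h1u_pos : 0 < ‖1 - u‖ := by
    have := norm_sub_norm_le (1 : ℂ) u
    rw [norm_one, hu] at this
    linarith
  have hmain : ‖1 - u‖ ^ 2 * S.re ≤ u.re - r ^ 2 + 2 * r ^ (n + 1) := by
    have hreal : ‖1 - u‖ ^ 2 * S.re = ((u - u ^ (n + 1)) * conj (1 - u)).re := by
      rw [← hS, mul_assoc, mul_conj, ← Complex.sq_norm, mul_comm]
      norm_cast
      rw [re_mul_ofReal]
    have hlin : (u * conj (1 - u)).re = u.re - r ^ 2 := by
      rw [map_sub, map_one, mul_sub, mul_one, mul_conj, ← Complex.sq_norm, hu, sub_re]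
      norm_cast
    have htail : -(2 * r ^ (n + 1)) ≤ (u ^ (n + 1) * conj (1 - u)).re := by
      have := neg_le_of_abs_le (abs_re_le_norm (u ^ (n + 1) * conj (1 - u)))
      rw [norm_mul, norm_pow, RCLike.norm_conj, hu] at this
      nlinarith [pow_nonneg (by linarith : (0:ℝ) ≤ r) (n + 1)]
    rw [hreal, sub_mul, sub_re, hlin]
    linarith
  have hu_re : u.re = r * ζ.re := re_ofReal_mul r ζ
  have hη : 0 < η := by linarith [pow_pos (by linarith : (0:ℝ) < r) n]
  have hneg : ‖1 - u‖ ^ 2 * S.re ≤ -(η / 8) := by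
    have h1 : r * ζ.re ≤ r * (r - η / 2) := by gcongr; linarith
    have h2 : r * r ^ n ≤ r * (η / 8) := by gcongr
    rw [hu_re, pow_succ' r n] at hmain
    nlinarith
  have hS_neg : S.re < 0 := by
    by_contra! h
    nlinarith [mul_nonneg (sq_nonneg ‖1 - u‖) h]
  nlinarith [mul_le_mul_of_nonpos_right (pow_le_pow_left₀ h1u_pos.le h1u 2) hS_neg.le]

theorem Circle.dist_sq_eq_two_sub_two_mul_re (z w : Circle) : dist z w ^ 2 = 2 - 2 * ((z : ℂ) * conj (w : ℂ)).re := by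
  rw [show dist z w = dist (z : ℂ) w from rfl, Complex.dist_eq, Complex.sq_norm, normSq_sub,
    Circle.normSq_coe, Circle.normSq_coe]
  ring

theorem exists_poly_re_le_neg_off_ball (w : Circle) {δ : ℝ} (hδ : 0 < δ) :
    ∃ G : ℂ[X], G.coeff 0 = 0 ∧ ∃ c > 0, ∃ B > 0, ∀ z : Circle, δ ≤ dist z w →
      (G.eval (z : ℂ)).re ≤ -c ∧ ‖G.eval (z : ℂ)‖ ≤ B := by
  obtain ⟨η, hη0, hη1, hηδ⟩ : ∃ η : ℝ, 0 < η ∧ η ≤ 1 ∧ η ≤ δ ^ 2 / 2 :=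
    ⟨min (δ ^ 2 / 2) 1, lt_min (by positivity) one_pos, min_le_right _ _, min_le_left _ _⟩
  obtain ⟨n, hn⟩ := exists_pow_lt_of_lt_one (by positivity : 0 < η / 8)
    (show 1 - η / 2 < 1 by linarith)
  have hn0 : 0 < n := Nat.pos_of_ne_zero (by rintro rfl; rw [pow_zero] at hn; linarith)
  refine ⟨∑ k ∈ range n, monomial (k + 1) ((((1 - η / 2 : ℝ)) * conj (w : ℂ)) ^ (k + 1)), ?_,
    η / 32, by positivity, n, by exact_mod_cast hn0, fun z hz => ?_⟩
  · simp [coeff_monomial]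
  set ζ : ℂ := z * conj (w : ℂ)
  have hζ : ‖ζ‖ = 1 := by rw [norm_mul, Complex.norm_conj, Circle.norm_coe, Circle.norm_coe, one_mul]
  have heval : eval (z : ℂ)
      (∑ k ∈ range n, monomial (k + 1) ((((1 - η / 2 : ℝ)) * conj (w : ℂ)) ^ (k + 1)))
      = ∑ k ∈ range n, (((1 - η / 2 : ℝ) : ℂ) * ζ) ^ (k + 1) := by
    simp only [eval_finsetSum, eval_monomial, ζ, ← mul_pow]
    ring_nf
  rw [heval]
  constructor
  · have hre : ζ.re ≤ 1 - δ ^ 2 / 2 := by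
      have := Circle.dist_sq_eq_two_sub_two_mul_re z w
      nlinarith [dist_nonneg (x := z) (y := w)]
    exact re_sum_pow_succ_le (by linarith) (by linarith) hn.le hζ (by linarith)
  · refine (norm_sum_le_of_le _ fun k _ => ?_).trans_eq (by simp : ∑ _ ∈ range n, (1 : ℝ) = n)
    rw [norm_pow, norm_mul, hζ, mul_one, norm_real, Real.norm_of_nonneg (by linarith)]
    exact pow_le_one₀ (by linarith) (by linarith)

theorem exists_poly_norm_le_off_ball (w : Circle) {δ : ℝ} (hδ : 0 < δ) :
    ∃ q : ℂ[X], q.coeff 0 = 1 ∧ ∃ σ < 1, ∀ z : Circle, δ ≤ dist z w → ‖q.eval (z : ℂ)‖ ≤ σ := by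
  obtain ⟨G, hG0, c, hc, B, hB, hG⟩ := exists_poly_re_le_neg_off_ball w hδ
  have hσ : 1 - (c / B) ^ 2 / 2 < 1 := by
    have := pow_pos (div_pos hc hB) 2
    linarith
  refine ⟨1 + C ((c / B ^ 2 : ℝ) : ℂ) * G, by simp [hG0], _, hσ, fun z hz => ?_⟩
  rw [eval_add, eval_one, eval_mul, eval_C]
  exact norm_one_add_mul_le hc (hG z hz).1 (hG z hz).2

theorem exists_poly_approx_one_off_ball (w : Circle) {δ ε : ℝ} (hδ : 0 < δ) (hε : 0 < ε) :
    ∃ P : ℂ[X], P.coeff 0 = 0 ∧ ∀ z : Circle, δ ≤ dist z w → ‖1 - P.eval (z : ℂ)‖ ≤ ε := by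
  obtain ⟨q, hq0, σ, hσ, hq⟩ := exists_poly_norm_le_off_ball w hδ
  obtain ⟨N, hN⟩ := exists_pow_lt_of_lt_one hε hσ
  have hP0 : (1 - q ^ N).coeff 0 = 0 := by
    rw [coeff_zero_eq_eval_zero] at hq0 ⊢
    simp [hq0]
  refine ⟨1 - q ^ N, hP0, fun z hz => ?_⟩
  rw [eval_sub, eval_one, eval_pow, sub_sub_cancel, norm_pow]
  exact (pow_le_pow_left₀ (norm_nonneg _) (hq z hz) N).trans hN.le

theorem exists_poly_approx_one_off_open {I : Set Circle} (hne : I.Nonempty) (ho : IsOpen I)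
    {ε : ℝ} (hε : 0 < ε) :
    ∃ P : ℂ[X], P.coeff 0 = 0 ∧ ∀ z : Circle, z ∉ I → ‖1 - P.eval (z : ℂ)‖ ≤ ε := by
  obtain ⟨w, hw⟩ := hne
  obtain ⟨δ, hδ, hball⟩ := Metric.isOpen_iff.1 ho w hw
  obtain ⟨P, hP0, hP⟩ := exists_poly_approx_one_off_ball w hδ hε
  exact ⟨P, hP0, fun z hz => hP z (not_lt.1 fun h => hz (hball h))⟩

theorem corridors_approximable_general {d : ℕ}
    (I : Fin d → Set Circle) (hI_ne : ∀ i, (I i).Nonempty) (hI_open : ∀ i, IsOpen (I i))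
    (ε : ℝ) (hε : 0 < ε) :
    ∃ (F : Finset (Fin d → ℕ)) (h : (Fin d → ℕ) → ℂ),
      (∀ m ∈ F, ∀ i, 1 ≤ m i) ∧
      ∀ z : Fin d → Circle, (∀ i, z i ∉ I i) →
        ‖1 - ∑ m ∈ F, h m * ∏ i, ((z i : ℂ) ^ (m i))‖ ≤ ε := by
  obtain ⟨δ, hδ, hδε⟩ := exists_pos_one_add_pow_sub_one_le d hε
  choose P hP0 hP using fun i => exists_poly_approx_one_off_open (hI_ne i) (hI_open i) hδ
  refine ⟨Fintype.piFinset fun i => (P i).support, fun m => ∏ i, (P i).coeff (m i),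
    fun m hm i => Nat.one_le_iff_ne_zero.2 fun h0 => ?_, fun z hz => ?_⟩
  · exact mem_support_iff.1 (Fintype.mem_piFinset.1 hm i) (h0 ▸ hP0 i)
  rw [← prod_eval_eq_sum_piFinset_support]
  exact (norm_one_sub_prod_le univ fun i _ => hP i (z i) (hz i)).trans (by simpa using hδε)

/-- Proposition 3: for nonempty open subsets `I₁, …, I_d` of the unit circle, the set
`(𝕋∖I₁) × ⋯ × (𝕋∖I_d)` is approximable: the constant function `1` can be uniformly
approximated on it by polynomials all of whose monomials have every exponent at least `1`. -/
theorem corridors_approximable {d : ℕ} (hd : 1 ≤ d)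
    (I : Fin d → Set Circle) (hI_ne : ∀ i, (I i).Nonempty) (hI_open : ∀ i, IsOpen (I i))
    (ε : ℝ) (hε : 0 < ε) :
    ∃ (F : Finset (Fin d → ℕ)) (h : (Fin d → ℕ) → ℂ),
      (∀ m ∈ F, ∀ i, 1 ≤ m i) ∧
      ∀ z : Fin d → Circle, (∀ i, z i ∉ I i) →
        ‖1 - ∑ m ∈ F, h m * ∏ i, ((z i : ℂ) ^ (m i))‖ ≤ ε :=
  corridors_approximable_general I hI_ne hI_open ε hε
end

section
/- Let S be a finite nonnegative Borel measure on the unit torus 𝕋^d = {z ∈ ℂ^d : |z_i| = 1 for all i}. Assume there is a closed set K ⊆ 𝕋^d with S(𝕋^d ∖ K) = 0 such that for every ε > 0 there exist a finite set F ⊆ {m ∈ ℤ^d : m_i ≥ 1 for all i} and coefficients (h_m)_{m∈F} in ℂ with sup_{z∈K} |1 − Σ_{m∈F} h_m z^m| ≤ ε. For n ≥ 1 define e_n(S) = inf over all h : {1,…,n}^d → ℂ of ∫_{𝕋^d} |1 − Σ_{m∈{1,…,n}^d} h_m z^m|² dS(z). Then Σ_{n≥1} n^{d−1} e_n(S) <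 ∞. -/
open MeasureTheory Complex

noncomputable section

/-- Best `L²(S)` interpolation error of the constant `1` by polynomials with exponents in
`{1,…,n}^d`. -/
def interpError {d : ℕ} (S : Measure (Fin d → Circle)) (n : ℕ) : ℝ :=
  ⨅ h : (Fin d → ℕ) → ℂ,
    ∫ z, ‖(1 : ℂ) - ∑ m ∈ Fintype.piFinset (fun _ : Fin d => Finset.Icc 1 n),
      h m * ∏ i, ((z i : ℂ) ^ (m i))‖ ^ 2 ∂S

/-!
A polynomial `P` with exponents in `{1,…,N}^d` and `‖1 - P‖ ≤ c` on `K` yields, for each `j`,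
the polynomial `1 - (1 - P)^j`, with exponents in `{1,…,jN}^d` and `‖1 - (1 - P)^j‖ ≤ c^j` on `K`.
Taking `c = 1/2`, the interpolation errors decay geometrically, `e_n(S) ≤ S(𝕋^d) · 4^{-⌊n/N⌋}`,
which beats the polynomial weight `n^{d-1}`.
-/

namespace Torus

variable {d : ℕ}

def monomial (m : Fin d → ℕ) (z : Fin d → Circle) : ℂ := ∏ i, (z i : ℂ) ^ m i

theorem monomial_add (m m' : Fin d → ℕ) : monomial (m + m') = monomial m * monomial m' := by
  funext z
  simp only [monomial, Pi.mul_apply, Pi.add_apply, pow_add, Finset.prod_mul_distrib]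

theorem continuous_monomial (m : Fin d → ℕ) : Continuous (monomial m) := by
  unfold monomial; fun_prop

def posPolys (d n : ℕ) : Submodule ℂ ((Fin d → Circle) → ℂ) :=
  Submodule.span ℂ (monomial '' ↑(Fintype.piFinset fun _ : Fin d => Finset.Icc 1 n))

theorem posPolys_mono {a b : ℕ} (h : a ≤ b) : posPolys d a ≤ posPolys d b := by
  refine Submodule.span_mono (Set.image_mono fun m hm => ?_)
  simp only [Finset.mem_coe, Fintype.mem_piFinset, Finset.mem_Icc] at hm ⊢
  exact fun i => ⟨(hm i).1, (hm i).2.trans h⟩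

theorem mul_mem_posPolys {a b : ℕ} {f g : (Fin d → Circle) → ℂ} (hf : f ∈ posPolys d a)
    (hg : g ∈ posPolys d b) : f * g ∈ posPolys d (a + b) := by
  refine (?_ : posPolys d a * posPolys d b ≤ posPolys d (a + b)) (Submodule.mul_mem_mul hf hg)
  rw [posPolys, posPolys, Submodule.span_mul_span]
  refine Submodule.span_mono ?_
  rintro _ ⟨_, ⟨m, hm, rfl⟩, _, ⟨m', hm', rfl⟩, rfl⟩
  refine ⟨m + m', ?_, monomial_add m m'⟩
  simp only [Finset.mem_coe, Fintype.mem_piFinset, Finset.mem_Icc] at hm hm' ⊢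
  exact fun i => ⟨(hm i).1.trans (Nat.le_add_right _ _), add_le_add (hm i).2 (hm' i).2⟩

theorem continuous_of_mem_posPolys {n : ℕ} {f : (Fin d → Circle) → ℂ}
    (hf : f ∈ posPolys d n) : Continuous f := by
  induction hf using Submodule.span_induction with
  | mem _ hx => obtain ⟨m, -, rfl⟩ := hx; exact continuous_monomial m
  | zero => exact continuous_const
  | add _ _ _ _ hf hg => exact hf.add hg
  | smul c _ _ hf => exact hf.const_smul c

theorem one_sub_one_sub_pow_mem_posPolys {N : ℕ} {P : (Fin d → Circle) → ℂ}
    (hP : P ∈ posPolys d N) (j : ℕ) : 1 - (1 - P) ^ j ∈ posPolys d (j * N) := by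
  induction j with
  | zero => simp
  | succ j ih =>
    have hsplit : 1 - (1 - P) ^ (j + 1) = (1 - (1 - P) ^ j) + P - (1 - (1 - P) ^ j) * P := by
      ring
    rw [hsplit, add_mul, one_mul]
    exact sub_mem (add_mem (posPolys_mono (Nat.le_add_right _ _) ih)
      (posPolys_mono (Nat.le_add_left _ _) hP)) (mul_mem_posPolys ih hP)

theorem interpError_le_of_mem_posPolys (S : Measure (Fin d → Circle)) {n : ℕ}
    {f : (Fin d → Circle) → ℂ} (hf : f ∈ posPolys d n) :
    interpError S n ≤ ∫ z, ‖1 - f z‖ ^ 2 ∂S := by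
  obtain ⟨c, rfl⟩ := (Submodule.mem_span_image_finset_iff_exists_fun' ℂ).1 hf
  refine (ciInf_le ⟨0, ?_⟩ c).trans_eq ?_
  · rintro _ ⟨h, rfl⟩
    exact integral_nonneg fun z => by positivity
  · simp only [Finset.sum_apply, Pi.smul_apply, smul_eq_mul, monomial]

theorem integral_norm_one_sub_sq_le (S : Measure (Fin d → Circle)) [IsFiniteMeasure S]
    {K : Set (Fin d → Circle)} (hSK : S Kᶜ = 0) {f : (Fin d → Circle) → ℂ} (hf : Continuous f)
    {b : ℝ} (hK : ∀ z ∈ K, ‖1 - f z‖ ≤ b) :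
    ∫ z, ‖1 - f z‖ ^ 2 ∂S ≤ b ^ 2 * S.real Set.univ := by
  have hint : Integrable (fun z => ‖1 - f z‖ ^ 2) S :=
    (by fun_prop : Continuous fun z => ‖1 - f z‖ ^ 2).integrable_of_hasCompactSupport
      (HasCompactSupport.of_compactSpace _)
  refine (integral_mono_ae hint (integrable_const (b ^ 2)) ?_).trans_eq (by simp [mul_comm])
  filter_upwards [measure_eq_zero_iff_ae_notMem.1 hSK] with z hz
  exact pow_le_pow_left₀ (norm_nonneg _) (hK z (by simpa using hz)) 2

theorem interpError_le_pow_div (S : Measure (Fin d → Circle)) [IsFiniteMeasure S]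
    {K : Set (Fin d → Circle)} (hSK : S Kᶜ = 0) {N : ℕ} {P : (Fin d → Circle) → ℂ}
    (hP : P ∈ posPolys d N) {c : ℝ} (hK : ∀ z ∈ K, ‖1 - P z‖ ≤ c) (n : ℕ) :
    interpError S n ≤ S.real Set.univ * (c ^ 2) ^ (n / N) := by
  set j := n / N
  have hQ := one_sub_one_sub_pow_mem_posPolys hP j
  have hQK : ∀ z ∈ K, ‖1 - (1 - (1 - P) ^ j) z‖ ≤ c ^ j := fun z hz => by
    simpa using pow_le_pow_left₀ (norm_nonneg _) (hK z hz) j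
  calc interpError S n ≤ ∫ z, ‖1 - (1 - (1 - P) ^ j) z‖ ^ 2 ∂S :=
        interpError_le_of_mem_posPolys S (posPolys_mono (Nat.div_mul_le_self n N) hQ)
    _ ≤ (c ^ j) ^ 2 * S.real Set.univ :=
        integral_norm_one_sub_sq_le S hSK (continuous_of_mem_posPolys hQ) hQK
    _ = S.real Set.univ * (c ^ 2) ^ j := by ring

end Torus

theorem interpError_nonneg {d : ℕ} (S : Measure (Fin d → Circle)) (n : ℕ) :
    0 ≤ interpError S n :=
  le_ciInf fun _ => integral_nonneg fun _ => by positivity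

theorem summable_pow_mul_of_le_pow_div {f : ℕ → ℝ} {C q : ℝ} {N : ℕ} (hN : 0 < N)
    (hq₀ : 0 < q) (hq₁ : q < 1) (hf₀ : ∀ n, 0 ≤ f n) (hf : ∀ n, f n ≤ C * q ^ (n / N))
    (k : ℕ) : Summable fun n : ℕ => (n : ℝ) ^ k * f n := by
  set r : ℝ := q ^ (N⁻¹ : ℝ)
  have hr₀ : 0 < r := Real.rpow_pos_of_pos hq₀ _
  have hr₁ : r < 1 := Real.rpow_lt_one hq₀.le hq₁ (by positivity)
  have hrN : r ^ N = q := Real.rpow_inv_natCast_pow hq₀.le hN.ne'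
  have hgeom : ∀ n, q ^ (n / N) ≤ q⁻¹ * r ^ n := fun n => by
    rw [le_inv_mul_iff₀ hq₀, ← pow_succ', ← hrN, ← pow_mul]
    exact pow_le_pow_of_le_one hr₀.le hr₁.le (Nat.lt_mul_div_succ n hN).le
  refine Summable.of_nonneg_of_le (fun n => mul_nonneg (by positivity) (hf₀ n)) (fun n => ?_)
    ((summable_pow_mul_geometric_of_norm_lt_one k (r := r)
      (by rwa [Real.norm_of_nonneg hr₀.le])).mul_left (max C 0 * q⁻¹))
  calc (n : ℝ) ^ k * f n ≤ (n : ℝ) ^ k * (max C 0 * (q⁻¹ * r ^ n)) := by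
        gcongr
        exact (hf n).trans (mul_le_mul (le_max_left _ _) (hgeom n) (by positivity)
          (le_max_right _ _))
    _ = max C 0 * q⁻¹ * ((n : ℝ) ^ k * r ^ n) := by ring

theorem strong_interpolability_general {d : ℕ}
    (S : Measure (Fin d → Circle)) [IsFiniteMeasure S]
    (K : Set (Fin d → Circle)) (hSK : S Kᶜ = 0)
    (happrox : ∀ ε : ℝ, 0 < ε →
      ∃ (F : Finset (Fin d → ℕ)) (h : (Fin d → ℕ) → ℂ),
        (∀ m ∈ F, ∀ i, 1 ≤ m i) ∧
        ∀ z ∈ K, ‖(1 : ℂ) - ∑ m ∈ F, h m * ∏ i, ((z i : ℂ) ^ (m i))‖ ≤ ε) :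
    Summable (fun n : ℕ => (n : ℝ) ^ (d - 1) * interpError S n) := by
  obtain ⟨F, h, hF_pos, hF_approx⟩ := happrox (1 / 2) (by norm_num)
  set N := max 1 (F.sup fun m => Finset.univ.sup m)
  have hP : ∑ m ∈ F, h m • Torus.monomial m ∈ Torus.posPolys d N := by
    refine Submodule.sum_mem _ fun m hm =>
      Submodule.smul_mem _ _ (Submodule.subset_span ⟨m, ?_, rfl⟩)
    simp only [Finset.mem_coe, Fintype.mem_piFinset, Finset.mem_Icc]
    exact fun i => ⟨hF_pos m hm i, (Finset.le_sup (Finset.mem_univ i)).trans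
      ((Finset.le_sup (f := fun m => Finset.univ.sup m) hm).trans (le_max_right _ _))⟩
  have hPK : ∀ z ∈ K, ‖1 - (∑ m ∈ F, h m • Torus.monomial m) z‖ ≤ 1 / 2 := fun z hz => by
    simpa [Finset.sum_apply, Torus.monomial] using hF_approx z hz
  exact summable_pow_mul_of_le_pow_div (le_max_left 1 _) (by norm_num) (by norm_num)
    (interpError_nonneg S)
    (Torus.interpError_le_pow_div S hSK hP hPK) (d - 1)

/-- Proposition 4 (strong interpolability): if the support of a finite measure `S` on the
torus `𝕋^d` is contained in a closed set `K` on which `1` is uniformly approximable by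
polynomials with all exponents at least `1`, then `Σ n^{d-1} e_n(S) < ∞`. -/
theorem strong_interpolability {d : ℕ}
    (S : Measure (Fin d → Circle)) [IsFiniteMeasure S]
    (K : Set (Fin d → Circle)) (hK_closed : IsClosed K) (hSK : S Kᶜ = 0)
    (happrox : ∀ ε : ℝ, 0 < ε →
      ∃ (F : Finset (Fin d → ℕ)) (h : (Fin d → ℕ) → ℂ),
        (∀ m ∈ F, ∀ i, 1 ≤ m i) ∧
        ∀ z ∈ K, ‖(1 : ℂ) - ∑ m ∈ F, h m * ∏ i, ((z i : ℂ) ^ (m i))‖ ≤ ε) :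
    Summable (fun n : ℕ => (n : ℝ) ^ (d - 1) * interpError S n) :=
  strong_interpolability_general S K hSK happrox
end
end

section
/- Let 𝕌 ⊆ ℂ be uniformly discrete, i.e. inf{|z−z'| : z, z' ∈ 𝕌, z ≠ z'} > 0. Let X = (X_m)_{m∈ℤ^d} be square-integrable complex random variables on a probability space, measurable as a map into ℤ^d → ℂ with the product σ-algebra, taking values in 𝕌 almost surely, and strongly stationary: for every k ∈ ℤ^d, (X_{m+k})_{m∈ℤ^d} has the same law as X. For n ≥ 1 and a sign vector ε ∈ {−1,1}^d define e_n^ε = inf over all h : {1,…,n}^d → ℂ of E|X_0 − Σ_{m∈{1,…,n}^d} h_m X_{(ε_1 m_1,…,ε_d m_d)}|². Assume that Σ_{n≥1} n^{d−1} e_n^ε < ∞ for every ε ∈ {−1,1}^d (X is strongly interpolable from every orthant). Then almost surely there exists N ∈ ℤ^d with all coordinates positive such that X_{m+N} = X_m for all m ∈ ℤ^d. -/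
/-!
Predict `X p` linearly from the orthant at `p` facing the origin, with the largest window that
stays strictly inside the sphere `{q | ‖q‖∞ = ‖p‖∞}`. By stationarity and Chebyshev the prediction
misses by `δ / 2` with probability `O(e_{‖p‖∞ - 1})`; a sphere of radius `n` has `O(n ^ (d - 1))`
points, so by Borel–Cantelli almost surely only finitely many predictions miss. Since `U` is
`δ`-separated, such a configuration is determined, by induction on `‖p‖∞`, by its values on a
finite cube, so the law of `X` lives on a countable set and is purely atomic. Finally, the diagonal
shifts of an atom of a finite shift-invariant measure are atoms of the same mass, hence finitely
many, which makes every atom periodic.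
-/

open MeasureTheory Finset

noncomputable section

namespace StrongInterpolation

section Shift

variable {G α : Type*}

def shift [Add G] (k : G) (x : G → α) : G → α := fun m => x (m + k)

lemma measurable_shift [Add G] [MeasurableSpace α] (k : G) : Measurable (shift (α := α) k) :=
  measurable_pi_lambda _ fun m => measurable_pi_apply (m + k)

variable [AddCommGroup G] [Countable G] [MeasurableSpace α] [MeasurableSingletonClass α]
  {μ : Measure (G → α)}

lemma measure_singleton_shift (hshift : ∀ k, MeasurePreserving (shift k) μ μ) (x : G → α)
    (k : G) : μ {shift k x} = μ {x} := by
  have hpre : shift (-k) ⁻¹' {x} = {shift k x} := by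
    ext y
    simp only [Set.mem_preimage, Set.mem_singleton_iff, funext_iff, shift]
    exact ⟨fun h m => by simpa using h (m + k), fun h m => by simp [h]⟩
  rw [← hpre, (hshift (-k)).measure_preimage (measurableSet_singleton x).nullMeasurableSet]

theorem exists_periodic_of_measure_singleton_ne_zero [IsFiniteMeasure μ]
    (hshift : ∀ k, MeasurePreserving (shift k) μ μ) {x : G → α} (hx : μ {x} ≠ 0) (k : G) :
    ∃ n : ℕ, 0 < n ∧ ∀ m, x (m + n • k) = x m := by
  have hfin : {y : G → α | μ {x} ≤ μ {y}}.Finite :=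
    Measure.finite_const_le_meas_of_disjoint_iUnion μ (pos_iff_ne_zero.mpr hx)
      (fun y => measurableSet_singleton y) (fun _ _ h => Set.disjoint_singleton.mpr h)
      (measure_ne_top μ _)
  obtain ⟨i, j, hij, heq⟩ := hfin.exists_lt_map_eq_of_forall_mem
    (f := fun n : ℕ => shift (n • k) x) fun n => (measure_singleton_shift hshift x _).ge
  refine ⟨j - i, Nat.sub_pos_of_lt hij, fun m => ?_⟩
  have := congrFun heq (m - i • k)
  simp only [shift, sub_add_cancel] at this
  rw [this, sub_nsmul k hij.le]
  congr 1
  abel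

end Shift

lemma countable_of_forall_le_dist {E : Type*} [PseudoMetricSpace E]
    [TopologicalSpace.SeparableSpace E] {U : Set E} {δ : ℝ} (hδ : 0 < δ)
    (hU : ∀ z ∈ U, ∀ z' ∈ U, z ≠ z' → δ ≤ dist z z') : U.Countable :=
  Set.PairwiseDisjoint.countable_of_isOpen (s := fun z => Metric.ball z (δ / 2))
    (fun z hz z' hz' hne => Metric.ball_disjoint_ball (by linarith [hU z hz z' hz' hne]))
    (fun _ _ => Metric.isOpen_ball) (fun _ _ => Metric.nonempty_ball.mpr (by positivity))

theorem ae_of_ae_mem_countable {β : Type*} [MeasurableSpace β] {μ : Measure β} {D : Set β}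
    (hD : D.Countable) (hμD : ∀ᵐ x ∂μ, x ∈ D) {Q : β → Prop}
    (hQ : ∀ x ∈ D, μ {x} ≠ 0 → Q x) : ∀ᵐ x ∂μ, Q x := by
  have hnull : μ {x | x ∈ D ∧ μ {x} = 0} = 0 := by
    rw [← Set.biUnion_of_singleton {x | x ∈ D ∧ μ {x} = 0},
      measure_biUnion_null_iff (hD.mono fun _ hx => hx.1)]
    exact fun _ hx => hx.2
  filter_upwards [hμD, measure_eq_zero_iff_ae_notMem.mp hnull] with x hxD hx
  exact hQ x hxD fun h0 => hx ⟨hxD, h0⟩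

lemma meas_norm_ge_le_integral_sq_div {α E : Type*} [MeasurableSpace α] [NormedAddCommGroup E]
    {μ : Measure α} [IsFiniteMeasure μ] {f : α → E} (hf : MemLp f 2 μ) {η : ℝ} (hη : 0 < η) :
    μ {x | η ≤ ‖f x‖} ≤ ENNReal.ofReal ((∫ x, ‖f x‖ ^ 2 ∂μ) / η ^ 2) := by
  have hmarkov := mul_meas_ge_le_integral_of_nonneg (ae_of_all μ fun x => by positivity)
    (hf.integrable_norm_pow two_ne_zero) (η ^ 2)
  have hset : {x | η ^ 2 ≤ ‖f x‖ ^ 2} = {x | η ≤ ‖f x‖} := by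
    ext x
    exact pow_le_pow_iff_left₀ hη.le (norm_nonneg _) two_ne_zero
  rw [hset] at hmarkov
  rw [← ofReal_measureReal]
  exact ENNReal.ofReal_le_ofReal ((le_div_iff₀' (by positivity)).mpr hmarkov)

lemma summable_succ_pow_mul {f : ℕ → ℝ} (hf : ∀ n, 0 ≤ f n) (k : ℕ)
    (h : Summable fun n : ℕ => (n : ℝ) ^ k * f n) :
    Summable fun n : ℕ => ((n : ℝ) + 1) ^ k * f n := by
  refine (summable_nat_add_iff 1).mp <|
    Summable.of_nonneg_of_le (fun n => by positivity [hf (n + 1)]) (fun n => ?_)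
      (((summable_nat_add_iff 1).mpr h).mul_left (2 ^ k))
  push_cast
  rw [← mul_assoc, ← mul_pow]
  gcongr
  · exact hf _
  · linarith

variable {d : ℕ}

def supNorm (p : Fin d → ℤ) : ℕ := univ.sup fun i => (p i).natAbs

lemma supNorm_le_iff {p : Fin d → ℤ} {n : ℕ} : supNorm p ≤ n ↔ ∀ i, (p i).natAbs ≤ n := by
  simp [supNorm, Finset.sup_le_iff]

lemma natAbs_le_supNorm (p : Fin d → ℤ) (i : Fin d) : (p i).natAbs ≤ supNorm p :=
  supNorm_le_iff.mp le_rfl i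

def cube (d n : ℕ) : Finset (Fin d → ℤ) := Fintype.piFinset fun _ => Icc (-(n : ℤ)) n

lemma mem_cube_iff {p : Fin d → ℤ} {n : ℕ} : p ∈ cube d n ↔ supNorm p ≤ n := by
  simp only [cube, Fintype.mem_piFinset, mem_Icc, supNorm_le_iff]
  exact forall_congr' fun i => by omega

lemma card_cube (d n : ℕ) : #(cube d n) = (2 * n + 1) ^ d := by
  simp only [cube, Fintype.card_piFinset, Int.card_Icc, prod_const, card_univ, Fintype.card_fin]
  congr 1
  omega

lemma finite_setOf_supNorm_le (M : ℕ) : {q : Fin d → ℤ | supNorm q ≤ M}.Finite :=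
  (cube d M).finite_toSet.subset fun _ hq => mem_cube_iff.mpr hq

def sphere (d n : ℕ) : Finset (Fin d → ℤ) := (cube d n).filter fun p => supNorm p = n

lemma mem_sphere_iff {p : Fin d → ℤ} {n : ℕ} : p ∈ sphere d n ↔ supNorm p = n := by
  simp only [sphere, mem_filter, mem_cube_iff]
  omega

lemma card_sphere_succ_le (n : ℕ) : #(sphere d (n + 1)) ≤ 2 * d * (3 * (n + 1)) ^ (d - 1) := by
  have hsub : sphere d (n + 1) ⊆ cube d (n + 1) \ cube d n := fun p hp => by
    simp only [mem_sdiff, mem_cube_iff, mem_sphere_iff.mp hp]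
    omega
  have hcube : cube d n ⊆ cube d (n + 1) := fun p hp => by
    rw [mem_cube_iff] at hp ⊢
    omega
  have hdiff : ((2 * (n + 1) + 1) ^ d : ℤ) - (2 * n + 1) ^ d ≤
      2 * d * (2 * (n + 1) + 1) ^ (d - 1) := by
    have h := abs_pow_sub_pow_le (2 * (n + 1) + 1 : ℤ) (2 * n + 1) d
    have hmax : max |(2 * (n + 1) + 1 : ℤ)| |2 * n + 1| = 2 * (n + 1) + 1 := by
      rw [abs_of_nonneg (by positivity), abs_of_nonneg (by positivity)]
      omega
    rw [hmax, show (2 * (n + 1) + 1 : ℤ) - (2 * n + 1) = 2 by ring, abs_two] at h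
    exact (le_abs_self _).trans h
  calc #(sphere d (n + 1)) ≤ #(cube d (n + 1)) - #(cube d n) := by
        rw [← card_sdiff_of_subset hcube]
        exact card_le_card hsub
    _ ≤ 2 * d * (2 * (n + 1) + 1) ^ (d - 1) := by
        rw [card_cube, card_cube]
        zify [Nat.pow_le_pow_left (by omega : 2 * n + 1 ≤ 2 * (n + 1) + 1) d]
        linarith
    _ ≤ 2 * d * (3 * (n + 1)) ^ (d - 1) := by gcongr; omega

def box (d n : ℕ) : Finset (Fin d → ℕ) := Fintype.piFinset fun _ => Icc 1 n

def reflect (ε : Fin d → ℤ) (m : Fin d → ℕ) : Fin d → ℤ := fun i => ε i * m i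

def predError (ε : Fin d → ℤ) (n : ℕ) (h : (Fin d → ℕ) → ℂ) (x : (Fin d → ℤ) → ℂ) : ℂ :=
  x 0 - ∑ m ∈ box d n, h m * x (reflect ε m)

def towardOrigin (p : Fin d → ℤ) : Fin d → ℤ := fun i => if 0 ≤ p i then -1 else 1

lemma supNorm_reflect_towardOrigin_add_lt {p : Fin d → ℤ} (hp : 0 < supNorm p)
    {m : Fin d → ℕ} (hm : m ∈ box d (supNorm p - 1)) :
    supNorm (reflect (towardOrigin p) m + p) < supNorm p := by
  suffices supNorm (reflect (towardOrigin p) m + p) ≤ supNorm p - 1 by omega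
  refine supNorm_le_iff.mpr fun i => ?_
  have hmi := mem_Icc.mp (Fintype.mem_piFinset.mp hm i)
  have hpi := natAbs_le_supNorm p i
  simp only [Pi.add_apply, reflect, towardOrigin]
  split_ifs <;> omega

/-- `c ε n` is a linear predictor from the orthant `ε` with window side `n`; at `p` it is used
from the orthant facing the origin, with the largest window inside the sphere through `p`. -/
def inwardResidual (c : (Fin d → ℤ) → ℕ → (Fin d → ℕ) → ℂ) (p : Fin d → ℤ)
    (x : (Fin d → ℤ) → ℂ) : ℂ :=
  predError (towardOrigin p) (supNorm p - 1) (c (towardOrigin p) (supNorm p - 1)) (shift p x)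

lemma inwardResidual_sub_inwardResidual (c : (Fin d → ℤ) → ℕ → (Fin d → ℕ) → ℂ)
    {p : Fin d → ℤ} (hp : 0 < supNorm p) {x y : (Fin d → ℤ) → ℂ}
    (hxy : ∀ q, supNorm q < supNorm p → x q = y q) :
    inwardResidual c p x - inwardResidual c p y = x p - y p := by
  simp only [inwardResidual, predError, shift, zero_add]
  rw [sum_congr rfl fun m hm =>
      congrArg (_ * ·) (hxy _ (supNorm_reflect_towardOrigin_add_lt hp hm)),
    sub_sub_sub_cancel_right]

theorem eq_of_inwardResidual_lt {U : Set ℂ} {δ : ℝ}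
    (hU : ∀ z ∈ U, ∀ z' ∈ U, z ≠ z' → δ ≤ ‖z - z'‖)
    (c : (Fin d → ℤ) → ℕ → (Fin d → ℕ) → ℂ) {M : ℕ} {x y : (Fin d → ℤ) → ℂ}
    (hxU : ∀ q, x q ∈ U) (hyU : ∀ q, y q ∈ U)
    (hx : ∀ p, M < supNorm p → ‖inwardResidual c p x‖ < δ / 2)
    (hy : ∀ p, M < supNorm p → ‖inwardResidual c p y‖ < δ / 2)
    (hxy : ∀ q, supNorm q ≤ M → x q = y q) : x = y := by
  suffices ∀ r, ∀ p, supNorm p = r → x p = y p from funext fun p => this _ p rfl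
  intro r
  induction r using Nat.strong_induction_on with
  | _ r ih =>
    rintro p rfl
    by_cases hM : supNorm p ≤ M
    · exact hxy p hM
    by_contra hne
    have hdiff := inwardResidual_sub_inwardResidual c (by omega) fun q hq => ih _ hq q rfl
    have := norm_sub_le (inwardResidual c p x) (inwardResidual c p y)
    rw [hdiff] at this
    linarith [hU _ (hxU p) _ (hyU p) hne, hx p (by omega), hy p (by omega)]

theorem countable_setOf_eventually_inwardResidual_lt {U : Set ℂ} (hUc : U.Countable) {δ : ℝ}
    (hU : ∀ z ∈ U, ∀ z' ∈ U, z ≠ z' → δ ≤ ‖z - z'‖)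
    (c : (Fin d → ℤ) → ℕ → (Fin d → ℕ) → ℂ) :
    {x : (Fin d → ℤ) → ℂ | (∀ q, x q ∈ U) ∧
      ∃ M : ℕ, ∀ p, M < supNorm p → ‖inwardResidual c p x‖ < δ / 2}.Countable := by
  have : Countable U := hUc.to_subtype
  have : ∀ M, Finite {q : Fin d → ℤ // supNorm q ≤ M} := fun M => finite_setOf_supNorm_le M
  let good (M : ℕ) := {x : (Fin d → ℤ) → ℂ | (∀ q, x q ∈ U) ∧
    ∀ p, M < supNorm p → ‖inwardResidual c p x‖ < δ / 2}
  refine (Set.countable_iUnion fun M => ?_).mono (s₂ := ⋃ M, good M)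
    fun x ⟨hxU, M, hM⟩ => Set.mem_iUnion.mpr ⟨M, hxU, hM⟩
  have hinj : Function.Injective
      fun (x : good M) (q : {q : Fin d → ℤ // supNorm q ≤ M}) => (⟨x.1 q, x.2.1 q⟩ : U) :=
    fun x y hxy => Subtype.ext <| eq_of_inwardResidual_lt hU c x.2.1 y.2.1 x.2.2 y.2.2
      fun q hq => congrArg Subtype.val (congrFun hxy ⟨q, hq⟩)
  exact hinj.countable

def signs (d : ℕ) : Finset (Fin d → ℤ) := Fintype.piFinset fun _ => {1, -1}

lemma mem_signs_iff {ε : Fin d → ℤ} : ε ∈ signs d ↔ ∀ i, ε i = 1 ∨ ε i = -1 := by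
  simp [signs]

lemma towardOrigin_mem_signs (p : Fin d → ℤ) : towardOrigin p ∈ signs d :=
  mem_signs_iff.mpr fun i => by unfold towardOrigin; split_ifs <;> simp

section Prediction

variable {μ : Measure ((Fin d → ℤ) → ℂ)}

variable (μ) in
/-- The paper's `e_n^ε`. -/
def bestPredError (ε : Fin d → ℤ) (n : ℕ) : ℝ :=
  ⨅ h : (Fin d → ℕ) → ℂ, ∫ x, ‖predError ε n h x‖ ^ 2 ∂μ

lemma measurable_predError (ε : Fin d → ℤ) (n : ℕ) (h : (Fin d → ℕ) → ℂ) :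
    Measurable (predError ε n h) :=
  (measurable_pi_apply 0).sub
    (Finset.measurable_sum _ fun _ _ => (measurable_pi_apply _).const_mul _)

lemma memLp_predError (hL2 : ∀ m, MemLp (fun x => x m) 2 μ) (ε : Fin d → ℤ) (n : ℕ)
    (h : (Fin d → ℕ) → ℂ) : MemLp (predError ε n h) 2 μ :=
  (hL2 0).sub (memLp_finsetSum _ fun _ _ => (hL2 _).const_mul _)

lemma meas_norm_inwardResidual_ge_le [IsFiniteMeasure μ]
    (hshift : ∀ k, MeasurePreserving (shift k) μ μ) (hL2 : ∀ m, MemLp (fun x => x m) 2 μ)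
    (c : (Fin d → ℤ) → ℕ → (Fin d → ℕ) → ℂ) (p : Fin d → ℤ) {η : ℝ} (hη : 0 < η) :
    μ {x | η ≤ ‖inwardResidual c p x‖} ≤ ENNReal.ofReal ((∫ x, ‖predError (towardOrigin p)
      (supNorm p - 1) (c (towardOrigin p) (supNorm p - 1)) x‖ ^ 2 ∂μ) / η ^ 2) := by
  have hmeas := measurableSet_le (measurable_const (a := η))
    (measurable_predError (towardOrigin p) (supNorm p - 1)
      (c (towardOrigin p) (supNorm p - 1))).norm
  exact ((hshift p).measure_preimage hmeas.nullMeasurableSet).le.trans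
    (meas_norm_ge_le_integral_sq_div (memLp_predError hL2 _ _ _) hη)

/-- Borel–Cantelli over the spheres `supNorm p = n + 1`, which have `O(n ^ (d - 1))` points. -/
theorem ae_eventually_norm_inwardResidual_lt [IsFiniteMeasure μ]
    (hshift : ∀ k, MeasurePreserving (shift k) μ μ) (hL2 : ∀ m, MemLp (fun x => x m) 2 μ)
    (c : (Fin d → ℤ) → ℕ → (Fin d → ℕ) → ℂ) (a : (Fin d → ℤ) → ℕ → ℝ)
    (hc : ∀ ε n, ∫ x, ‖predError ε n (c ε n) x‖ ^ 2 ∂μ ≤ a ε n)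
    (ha : ∀ ε ∈ signs d, Summable fun n : ℕ => (n : ℝ) ^ (d - 1) * a ε n)
    {η : ℝ} (hη : 0 < η) :
    ∀ᵐ x ∂μ, ∃ M : ℕ, ∀ p, M < supNorm p → ‖inwardResidual c p x‖ < η := by
  have ha0 : ∀ ε n, 0 ≤ a ε n := fun ε n =>
    (integral_nonneg fun _ => by positivity).trans (hc ε n)
  let A (n : ℕ) : ℝ := ∑ ε ∈ signs d, a ε n
  let shell (n : ℕ) := ⋃ p ∈ sphere d (n + 1), {x | η ≤ ‖inwardResidual c p x‖}
  have hbad : ∀ n, ∀ p ∈ sphere d (n + 1), μ {x | η ≤ ‖inwardResidual c p x‖} ≤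
      ENNReal.ofReal (A n / η ^ 2) := fun n p hp => by
    refine (meas_norm_inwardResidual_ge_le hshift hL2 c p hη).trans
      (ENNReal.ofReal_le_ofReal ?_)
    rw [mem_sphere_iff.mp hp, Nat.add_sub_cancel]
    gcongr
    exact (hc _ _).trans (single_le_sum (fun ε _ => ha0 ε n) (towardOrigin_mem_signs p))
  have hshell : ∀ n, μ (shell n) ≤
      ENNReal.ofReal (2 * d * 3 ^ (d - 1) / η ^ 2 * (((n : ℝ) + 1) ^ (d - 1) * A n)) :=
    fun n => calc
      μ (shell n) ≤ ∑ p ∈ sphere d (n + 1), μ {x | η ≤ ‖inwardResidual c p x‖} :=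
          measure_biUnion_finset_le _ _
      _ ≤ #(sphere d (n + 1)) * ENNReal.ofReal (A n / η ^ 2) := by
          simpa using sum_le_sum (hbad n)
      _ ≤ ENNReal.ofReal (2 * d * (3 * (n + 1)) ^ (d - 1) * (A n / η ^ 2)) := by
          rw [ENNReal.ofReal_mul (by positivity)]
          gcongr
          exact_mod_cast card_sphere_succ_le n
      _ = _ := by
          congr 1
          rw [mul_pow]
          ring
  have hsum : Summable fun n : ℕ => ((n : ℝ) + 1) ^ (d - 1) * A n := by
    simp only [A, mul_sum]
    exact summable_sum fun ε hε => summable_succ_pow_mul (ha0 ε) _ (ha ε hε)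
  have hBC := ae_eventually_notMem (ne_top_of_le_ne_top
    (hsum.mul_left (2 * d * 3 ^ (d - 1) / η ^ 2)).tsum_ofReal_ne_top
    (ENNReal.tsum_le_tsum hshell))
  filter_upwards [hBC] with x hx
  obtain ⟨M, hM⟩ := Filter.eventually_atTop.mp hx
  refine ⟨M + 1, fun p hp => not_le.mp fun hle => hM (supNorm p - 1) (by omega) ?_⟩
  exact Set.mem_biUnion (mem_sphere_iff.mpr (by omega)) hle

theorem ae_periodic_of_summable_bestPredError [IsFiniteMeasure μ] {U : Set ℂ} {δ : ℝ}
    (hδ : 0 < δ) (hU : ∀ z ∈ U, ∀ z' ∈ U, z ≠ z' → δ ≤ ‖z - z'‖)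
    (hshift : ∀ k, MeasurePreserving (shift k) μ μ) (hL2 : ∀ m, MemLp (fun x => x m) 2 μ)
    (hval : ∀ᵐ x ∂μ, ∀ m, x m ∈ U)
    (hsum : ∀ ε : Fin d → ℤ, (∀ i, ε i = 1 ∨ ε i = -1) →
      Summable fun n : ℕ => (n : ℝ) ^ (d - 1) * bestPredError μ ε n) :
    ∀ᵐ x ∂μ, ∃ N : Fin d → ℤ, (∀ i, 0 < N i) ∧ ∀ m, x (m + N) = x m := by
  have hUc : U.Countable := countable_of_forall_le_dist hδ fun z hz z' hz' hne => by
    simpa [dist_eq_norm] using hU z hz z' hz' hne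
  choose c hc using fun ε n => exists_lt_of_ciInf_lt
    (lt_add_of_pos_right (bestPredError μ ε n) (pow_pos (one_half_pos (α := ℝ)) n))
  have hpredictable := ae_eventually_norm_inwardResidual_lt hshift hL2 c
    (fun ε n => bestPredError μ ε n + (1 / 2) ^ n) (fun ε n => (hc ε n).le)
    (fun ε hε => by
      simpa only [mul_add] using (hsum ε (mem_signs_iff.mp hε)).add
        (summable_pow_mul_geometric_of_norm_lt_one (d - 1) (by norm_num : ‖(1 / 2 : ℝ)‖ < 1)))
    (half_pos hδ)
  refine ae_of_ae_mem_countable (countable_setOf_eventually_inwardResidual_lt hUc hU c)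
    (hval.and hpredictable) fun x _ hx => ?_
  obtain ⟨n, hn, hper⟩ := exists_periodic_of_measure_singleton_ne_zero hshift hx 1
  exact ⟨n • 1, fun _ => by simpa using hn, hper⟩

end Prediction

end StrongInterpolation

end

open StrongInterpolation

theorem strongly_interpolable_periodic_general {d : ℕ}
    (U : Set ℂ) (hU : ∃ δ : ℝ, 0 < δ ∧ ∀ z ∈ U, ∀ z' ∈ U, z ≠ z' → δ ≤ ‖z - z'‖)
    {Ω : Type} [MeasurableSpace Ω] (P : Measure Ω) [IsProbabilityMeasure P]
    (X : (Fin d → ℤ) → Ω → ℂ)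
    (hmeas : Measurable fun ω => (fun m => X m ω : (Fin d → ℤ) → ℂ))
    (hL2 : ∀ m, MemLp (X m) 2 P)
    (hval : ∀ᵐ ω ∂P, ∀ m, X m ω ∈ U)
    (hstat : ∀ k : Fin d → ℤ,
      Measure.map (fun ω => (fun m => X (m + k) ω : (Fin d → ℤ) → ℂ)) P
        = Measure.map (fun ω => (fun m => X m ω : (Fin d → ℤ) → ℂ)) P)
    (hinterp : ∀ sgn : Fin d → ℤ, (∀ i, sgn i = 1 ∨ sgn i = -1) →
      Summable (fun n : ℕ => (n : ℝ) ^ (d - 1) *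
        ⨅ h : (Fin d → ℕ) → ℂ,
          ∫ ω, ‖X 0 ω - ∑ m ∈ Fintype.piFinset (fun _ : Fin d => Finset.Icc 1 n),
            h m * X (fun i => sgn i * (m i : ℤ)) ω‖ ^ 2 ∂P)) :
    ∀ᵐ ω ∂P, ∃ N : Fin d → ℤ, (∀ i, 0 < N i) ∧ ∀ m, X (m + N) ω = X m ω := by
  obtain ⟨δ, hδ, hsep⟩ := hU
  have hUc : U.Countable := countable_of_forall_le_dist hδ fun z hz z' hz' hne => by
    simpa [dist_eq_norm] using hsep z hz z' hz' hne
  have hvalset : MeasurableSet {x : (Fin d → ℤ) → ℂ | ∀ m, x m ∈ U} := by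
    rw [Set.ofPred_forall]
    exact MeasurableSet.iInter fun m => measurable_pi_apply m hUc.measurableSet
  refine ae_of_ae_map hmeas.aemeasurable <| ae_periodic_of_summable_bestPredError hδ hsep
    (fun k => ⟨measurable_shift k, by
      rw [Measure.map_map (measurable_shift k) hmeas]
      exact hstat k⟩)
    (fun m => (memLp_map_measure_iff (measurable_pi_apply m).aestronglyMeasurable
      hmeas.aemeasurable).mpr (hL2 m))
    ((ae_map_iff hmeas.aemeasurable hvalset).mpr hval)
    fun ε hε => ?_
  convert hinterp ε hε using 3 with n
  exact iInf_congr fun h => integral_map hmeas.aemeasurable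
    ((measurable_predError ε n h).norm.pow_const 2).aestronglyMeasurable

/-- Proposition 5: a strongly stationary field on `ℤ^d` with values in a uniformly discrete
set `𝕌 ⊆ ℂ` which is strongly interpolable from every orthant
(`Σ_n n^{d-1} e_n^ε < ∞` for every sign vector `ε`) is almost surely periodic. -/
theorem strongly_interpolable_periodic {d : ℕ} (hd : 1 ≤ d)
    (U : Set ℂ) (hU : ∃ δ : ℝ, 0 < δ ∧ ∀ z ∈ U, ∀ z' ∈ U, z ≠ z' → δ ≤ ‖z - z'‖)
    {Ω : Type} [MeasurableSpace Ω] (P : Measure Ω) [IsProbabilityMeasure P]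
    (X : (Fin d → ℤ) → Ω → ℂ)
    (hmeas : Measurable fun ω => (fun m => X m ω : (Fin d → ℤ) → ℂ))
    (hL2 : ∀ m, MemLp (X m) 2 P)
    (hval : ∀ᵐ ω ∂P, ∀ m, X m ω ∈ U)
    (hstat : ∀ k : Fin d → ℤ,
      Measure.map (fun ω => (fun m => X (m + k) ω : (Fin d → ℤ) → ℂ)) P
        = Measure.map (fun ω => (fun m => X m ω : (Fin d → ℤ) → ℂ)) P)
    (hinterp : ∀ sgn : Fin d → ℤ, (∀ i, sgn i = 1 ∨ sgn i = -1) →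
      Summable (fun n : ℕ => (n : ℝ) ^ (d - 1) *
        ⨅ h : (Fin d → ℕ) → ℂ,
          ∫ ω, ‖X 0 ω - ∑ m ∈ Fintype.piFinset (fun _ : Fin d => Finset.Icc 1 n),
            h m * X (fun i => sgn i * (m i : ℤ)) ω‖ ^ 2 ∂P)) :
    ∀ᵐ ω ∂P, ∃ N : Fin d → ℤ, (∀ i, 0 < N i) ∧ ∀ m, X (m + N) ω = X m ω :=
  strongly_interpolable_periodic_general U hU P X hmeas hL2 hval hstat hinterp
end

section
/- Let ψ : ℂ → ℂ be an entire function, not identically zero, and suppose there are constants C > 0, N ∈ ℕ and R ≥ 0 such that |ψ(z)| ≤ C·(1+|z|)^N·exp(R·|z|) for all z ∈ ℂ. For T > 0 let n_T(ψ) denote the (finite) number of zeros of ψ in the closed disc {z ∈ ℂ : |z| ≤ T}, counted without multiplicity. Then liminf_{T→∞} n_T(ψ)/T ≤ R. -/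
/-!
By Jensen's formula, `∑ log (S / ‖a‖)` over the zeros `a` of `ψ` in the closed disc of radius `S`
(each counted once) is at most `log max_{‖z‖ = S} ‖ψ z‖ + O(1) = R S + O(log S)`. For `1 ≤ T ≤ S`
this sum dominates `∫_T^S n(t) / t dt`, where `n(t)` counts the zeros in the disc of radius `t`.
If `liminf n(T) / T > b > R`, then `n(t) ≥ b t` for `t ≥ T`, so the integral is at least
`b (S - T)`, which exceeds `R S + O(log S)` for large `S`.
-/

open Filter Real Set MeasureTheory intervalIntegral Metric MeromorphicOn
open scoped Finset

theorem intervalIntegrable_indicator_Ici_inv {a T S : ℝ} (hT : 0 < T) (hTS : T ≤ S) :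
    IntervalIntegrable ((Ici a).indicator fun t ↦ t⁻¹) volume T S := by
  have hinv : IntervalIntegrable (fun t : ℝ ↦ t⁻¹) volume T S :=
    intervalIntegral.intervalIntegrable_inv
      (fun t ht ↦ (hT.trans_le (uIcc_of_le hTS ▸ ht).1).ne') continuousOn_id
  rw [intervalIntegrable_iff_integrableOn_Ioc_of_le hTS] at hinv ⊢
  exact hinv.indicator measurableSet_Ici

theorem integral_indicator_Ici_inv {a T S : ℝ} (hT : 0 < T) (hTS : T ≤ S) (haS : a ≤ S) :
    ∫ t in T..S, (Ici a).indicator (fun t ↦ t⁻¹) t = log S - log (max a T) := by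
  set c := max a T
  have hTc : T ≤ c := le_max_right a T
  have hcS : c ≤ S := max_le haS hTS
  have hc : 0 < c := hT.trans_le hTc
  have hbelow : ∫ t in T..c, (Ici a).indicator (fun t ↦ t⁻¹) t = 0 := by
    rw [integral_congr_Ioo_of_le hTc (g := fun _ ↦ 0) fun t ht ↦ ?_,
      intervalIntegral.integral_zero]
    exact indicator_of_notMem (fun hat ↦ ht.2.not_ge (max_le hat ht.1.le)) _
  have habove : ∫ t in c..S, (Ici a).indicator (fun t ↦ t⁻¹) t = ∫ t in c..S, t⁻¹ :=
    integral_congr_Ioo_of_le hcS fun t ht ↦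
      indicator_of_mem (Set.mem_Ici.2 ((le_max_left a T).trans ht.1.le)) _
  rw [← integral_add_adjacent_intervals
      (intervalIntegrable_indicator_Ici_inv hT hTc) (intervalIntegrable_indicator_Ici_inv hc hcS),
    hbelow, habove, integral_inv_of_pos hc (hc.trans_le hcS), log_div (hc.trans_le hcS).ne' hc.ne',
    zero_add]

theorem integral_card_filter_le_div {ι : Type*} (s : Finset ι) (a : ι → ℝ) {T S : ℝ}
    (hT : 0 < T) (hTS : T ≤ S) (ha : ∀ i ∈ s, a i ≤ S) :
    ∫ t in T..S, (#{i ∈ s | a i ≤ t} : ℝ) / t = ∑ i ∈ s, (log S - log (max (a i) T)) := by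
  have hsum (t : ℝ) : (#{i ∈ s | a i ≤ t} : ℝ) / t = ∑ i ∈ s, (Ici (a i)).indicator (·⁻¹) t := by
    rw [Finset.card_filter, Nat.cast_sum, Finset.sum_div]
    refine Finset.sum_congr rfl fun i _ ↦ ?_
    by_cases h : a i ≤ t <;> simp [h]
  simp_rw [hsum]
  rw [integral_finsetSum fun i _ ↦ intervalIntegrable_indicator_Ici_inv hT hTS]
  exact Finset.sum_congr rfl fun i hi ↦ integral_indicator_Ici_inv hT hTS (ha i hi)

theorem mul_sub_le_sum_log_sub_log_max {ι : Type*} (s : Finset ι) (a : ι → ℝ) {T S b : ℝ}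
    (hT : 0 < T) (hTS : T ≤ S) (ha : ∀ i ∈ s, a i ≤ S)
    (hcount : ∀ t ∈ Icc T S, b * t ≤ #{i ∈ s | a i ≤ t}) :
    b * (S - T) ≤ ∑ i ∈ s, (log S - log (max (a i) T)) := by
  have hmono : Monotone fun t : ℝ ↦ (#{i ∈ s | a i ≤ t} : ℝ) := fun t t' htt' ↦ by
    simp only [Nat.cast_le]
    exact Finset.card_le_card (Finset.monotone_filter_right s fun i _ (h : a i ≤ t) ↦ h.trans htt')
  have hint : IntervalIntegrable (fun t : ℝ ↦ (#{i ∈ s | a i ≤ t} : ℝ) / t) volume T S := by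
    simp_rw [div_eq_mul_inv]
    exact hmono.intervalIntegrable.mul_continuousOn <| continuousOn_inv₀.mono fun t ht ↦
      (hT.trans_le (uIcc_of_le hTS ▸ ht).1).ne'
  rw [← integral_card_filter_le_div s a hT hTS ha]
  calc b * (S - T) = ∫ _ in T..S, b := by simp [mul_comm]
    _ ≤ _ := integral_mono_on hTS intervalIntegrable_const hint fun t ht ↦
      (le_div_iff₀ (hT.trans_le ht.1)).2 (hcount t ht)

theorem MeromorphicOn.finsum_divisor_mul_log_sub_le {f : ℂ → ℂ} {S B : ℝ} (hS : 0 < S)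
    (hf : MeromorphicOn f (closedBall 0 S)) (hB : ∀ z ∈ sphere (0 : ℂ) S, log ‖f z‖ ≤ B) :
    ∑ᶠ u, divisor f (closedBall 0 S) u * (log S - log ‖u‖)
      ≤ B - log ‖meromorphicTrailingCoeffAt f 0‖ := by
  rw [← abs_of_pos hS] at hf hB
  have hjensen := hf.circleAverage_log_norm hS.ne'
  have havg : circleAverage (log ‖f ·‖) 0 S ≤ B :=
    circleAverage_mono_on_of_le_circle
      (hf.mono_set sphere_subset_closedBall).circleIntegrable_log_norm hB
  have hcount := countingFunction_finsum_eq_finsum_add (c := 0) hS.ne'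
    ((divisor f (closedBall 0 S)).finiteSupport (isCompact_closedBall 0 S))
  rw [abs_of_pos hS] at hjensen
  simp only [zero_sub, norm_neg] at hjensen hcount
  linarith

theorem Differentiable.one_le_divisor {f : ℂ → ℂ} (hf : Differentiable ℂ f)
    (hne : ∃ w, f w ≠ 0) {U : Set ℂ} {z : ℂ} (hz : z ∈ U) (hfz : f z = 0) :
    1 ≤ divisor f U z := by
  have han : AnalyticOnNhd ℂ f univ := Complex.analyticOnNhd_univ_iff_differentiable.2 hf
  obtain ⟨w, hw⟩ := hne
  have hord : analyticOrderAt f z ≠ ⊤ :=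
    han.analyticOrderAt_ne_top_of_isPreconnected isPreconnected_univ (mem_univ w) (mem_univ z)
      (by simp [(han w (mem_univ w)).analyticOrderAt_eq_zero.2 hw])
  have hpos : analyticOrderAt f z ≠ 0 := by
    simp [analyticOrderAt_eq_zero, han z (mem_univ z), hfz]
  obtain ⟨n, hn⟩ := ENat.ne_top_iff_exists.1 hord
  rw [(han.mono (subset_univ U)).divisor_apply hz, ← hn]
  rw [← hn] at hpos
  simp only [ENat.map_natCast, WithTop.untop₀_coe]
  norm_cast at hpos ⊢
  omega

theorem Differentiable.finite_setOf_norm_le_and_eq_zero {f : ℂ → ℂ} (hf : Differentiable ℂ f)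
    (hne : ∃ w, f w ≠ 0) (S : ℝ) : {z : ℂ | ‖z‖ ≤ S ∧ f z = 0}.Finite :=
  ((divisor f (closedBall 0 S)).finiteSupport (isCompact_closedBall 0 S)).subset fun _ hz ↦
    (zero_lt_one.trans_le (hf.one_le_divisor hne (mem_closedBall_zero_iff.2 hz.1) hz.2)).ne'

theorem sum_log_sub_log_max_le_finsum_divisor {f : ℂ → ℂ}
    (hf : Differentiable ℂ f) (hne : ∃ w, f w ≠ 0) {T S : ℝ} (hT : 1 ≤ T) (hTS : T ≤ S)
    (Z : Finset ℂ) (hZ : ∀ z ∈ Z, ‖z‖ ≤ S ∧ f z = 0) :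
    ∑ z ∈ Z, (log S - log (max ‖z‖ T))
      ≤ ∑ᶠ u, divisor f (closedBall 0 S) u * (log S - log ‖u‖) := by
  set D := divisor f (closedBall 0 S)
  have han : AnalyticOnNhd ℂ f (closedBall 0 S) := fun z _ ↦ hf.analyticAt z
  have hD : ∀ z ∈ Z, 1 ≤ D z := fun z hz ↦
    hf.one_le_divisor hne (mem_closedBall_zero_iff.2 (hZ z hz).1) (hZ z hz).2
  -- `log 0 = 0`: a zero at the origin carries weight `log S`.
  have hlog_le {x y : ℝ} (hx : 0 ≤ x) (hxy : x ≤ y) (hy : 1 ≤ y) : log x ≤ log y := by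
    rcases hx.eq_or_lt with rfl | hx
    · simpa using log_nonneg hy
    · exact log_le_log hx hxy
  have hweight : ∀ u ∈ closedBall (0 : ℂ) S, 0 ≤ log S - log ‖u‖ := fun u hu ↦
    sub_nonneg.2 (hlog_le (norm_nonneg u) (mem_closedBall_zero_iff.1 hu) (hT.trans hTS))
  have hfin := D.finiteSupport (isCompact_closedBall 0 S)
  rw [finsum_eq_sum_of_support_subset _ (s := hfin.toFinset) fun u hu ↦
    hfin.mem_toFinset.2 fun h ↦ hu (by simp [h])]
  calc ∑ z ∈ Z, (log S - log (max ‖z‖ T))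
      ≤ ∑ z ∈ Z, D z * (log S - log ‖z‖) := Finset.sum_le_sum fun z hz ↦ by
        have hmax : log ‖z‖ ≤ log (max ‖z‖ T) :=
          hlog_le (norm_nonneg z) (le_max_left _ _) (hT.trans (le_max_right _ _))
        have hw := hweight z (mem_closedBall_zero_iff.2 (hZ z hz).1)
        have : (1 : ℝ) ≤ D z := by exact_mod_cast hD z hz
        nlinarith
    _ ≤ ∑ u ∈ hfin.toFinset, D u * (log S - log ‖u‖) := by
      refine Finset.sum_le_sum_of_subset_of_nonneg (fun z hz ↦ ?_) fun u hu _ ↦ ?_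
      · simpa using (zero_lt_one.trans_le (hD z hz)).ne'
      · have hu : u ∈ closedBall (0 : ℂ) S := D.supportWithinDomain (by simpa using hu)
        exact mul_nonneg (by exact_mod_cast han.divisor_nonneg u) (hweight u hu)

theorem mul_sub_le_of_mul_le_ncard_zeros {f : ℂ → ℂ} (hf : Differentiable ℂ f)
    (hne : ∃ w, f w ≠ 0) {T S b B : ℝ} (hT : 1 ≤ T) (hTS : T ≤ S)
    (hcount : ∀ t ∈ Icc T S, b * t ≤ {z : ℂ | ‖z‖ ≤ t ∧ f z = 0}.ncard)
    (hB : ∀ z ∈ sphere (0 : ℂ) S, log ‖f z‖ ≤ B) :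
    b * (S - T) ≤ B - log ‖meromorphicTrailingCoeffAt f 0‖ := by
  set Z := (hf.finite_setOf_norm_le_and_eq_zero hne S).toFinset
  have hZ : ∀ z ∈ Z, ‖z‖ ≤ S ∧ f z = 0 := fun z hz ↦ by simpa [Z] using hz
  have hncard : ∀ t ≤ S, {z : ℂ | ‖z‖ ≤ t ∧ f z = 0}.ncard = #{z ∈ Z | ‖z‖ ≤ t} := by
    intro t ht
    rw [← Set.ncard_coe_finset]
    congr 1
    ext z
    simp only [mem_ofPred_eq, Finset.coe_filter, Z, Set.Finite.mem_toFinset]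
    exact ⟨fun h ↦ ⟨⟨h.1.trans ht, h.2⟩, h.1⟩, fun h ↦ ⟨h.2, h.1.2⟩⟩
  have hmero : MeromorphicOn f (closedBall 0 S) := fun z _ ↦ (hf.analyticAt z).meromorphicAt
  calc b * (S - T) ≤ ∑ z ∈ Z, (log S - log (max ‖z‖ T)) :=
        mul_sub_le_sum_log_sub_log_max Z (‖·‖) (by linarith) hTS (fun z hz ↦ (hZ z hz).1)
          fun t ht ↦ hncard t ht.2 ▸ hcount t ht
    _ ≤ ∑ᶠ u, divisor f (closedBall 0 S) u * (log S - log ‖u‖) :=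
        sum_log_sub_log_max_le_finsum_divisor hf hne hT hTS Z hZ
    _ ≤ _ := hmero.finsum_divisor_mul_log_sub_le (by linarith) hB

theorem eventually_mul_le_of_lt_liminf_div {g : ℝ → ℝ} {b : ℝ} (hg : ∀ t, 0 ≤ g t)
    (hb : b < liminf (fun t ↦ g t / t) atTop) : ∀ᶠ t in atTop, b * t ≤ g t := by
  have hbdd : IsBoundedUnder (· ≥ ·) atTop fun t ↦ g t / t :=
    isBoundedUnder_of_eventually_ge <|
      (eventually_ge_atTop 0).mono fun t ht ↦ div_nonneg (hg t) ht
  filter_upwards [eventually_lt_of_lt_liminf hb hbdd, eventually_gt_atTop 0] with t ht htpos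
  exact ((lt_div_iff₀ htpos).1 ht).le

theorem log_le_of_le_mul_pow_mul_exp {x C R r : ℝ} {N : ℕ} (hC : 0 < C) (hR : 0 ≤ R)
    (hr : 0 ≤ r) (hx0 : 0 ≤ x) (hx : x ≤ C * (1 + r) ^ N * exp (R * r)) :
    log x ≤ |log C| + N * log (1 + r) + R * r := by
  have hlog1 : 0 ≤ log (1 + r) := log_nonneg (by linarith)
  rcases hx0.eq_or_lt with rfl | hx0
  · rw [log_zero]
    positivity
  calc log x ≤ log (C * (1 + r) ^ N * exp (R * r)) := log_le_log hx0 hx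
    _ = log C + N * log (1 + r) + R * r := by
      rw [log_mul (by positivity) (exp_pos _).ne', log_mul hC.ne' (by positivity), log_pow,
        log_exp]
    _ ≤ _ := by linarith [le_abs_self (log C)]

theorem eventually_add_mul_log_add_mul_lt_mul (A N : ℝ) {R b : ℝ} (hRb : R < b) :
    ∀ᶠ S in atTop, A + N * log (1 + S) + R * S < b * S := by
  have hlog : (fun S : ℝ ↦ log (1 + S)) =o[atTop] id := by
    refine (isLittleO_log_id_atTop.comp_tendsto
      (tendsto_atTop_add_const_left atTop 1 tendsto_id)).trans_isBigO ?_
    exact (Asymptotics.isLittleO_const_id_atTop 1).isBigO.add (Asymptotics.isBigO_refl _ _)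
  have hsub : (fun S : ℝ ↦ A + N * log (1 + S)) =o[atTop] id :=
    (Asymptotics.isLittleO_const_id_atTop A).add (hlog.const_mul_left N)
  filter_upwards [hsub.bound (half_pos (sub_pos.2 hRb)), eventually_gt_atTop 0] with S hS hSpos
  rw [Real.norm_eq_abs, id_eq, Real.norm_eq_abs, abs_of_pos hSpos] at hS
  nlinarith [le_abs_self (A + N * log (1 + S))]

/-- Jensen's identity consequence (Lemma 3): a nonzero entire function of exponential type
`R` (i.e. `|ψ(z)| ≤ C(1+|z|)^N e^{R|z|}`) has zero-counting function `n_T(ψ)` (zeros in the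
closed disc of radius `T`, counted without multiplicity) satisfying
`liminf_{T→∞} n_T(ψ)/T ≤ R`. -/
theorem jensen_zero_density (ψ : ℂ → ℂ) (hψ : Differentiable ℂ ψ)
    (hne : ¬ ∀ z, ψ z = 0)
    (C : ℝ) (hC : 0 < C) (N : ℕ) (R : ℝ) (hR : 0 ≤ R)
    (hbound : ∀ z : ℂ, ‖ψ z‖ ≤ C * (1 + ‖z‖) ^ N * Real.exp (R * ‖z‖)) :
    Filter.liminf
        (fun T : ℝ => (Set.ncard {z : ℂ | ‖z‖ ≤ T ∧ ψ z = 0} : ℝ) / T)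
        Filter.atTop
      ≤ R := by
  by_contra! hlt
  obtain ⟨b, hRb, hb⟩ := exists_between hlt
  obtain ⟨T, hT⟩ := eventually_atTop.1 <|
    (eventually_mul_le_of_lt_liminf_div (fun _ ↦ Nat.cast_nonneg _) hb).and
      (eventually_ge_atTop 1)
  set c := ‖meromorphicTrailingCoeffAt ψ 0‖
  have hjensen (S : ℝ) (hS : T ≤ S) :
      b * (S - T) ≤ |log C| + N * log (1 + S) + R * S - log c :=
    mul_sub_le_of_mul_le_ncard_zeros hψ (not_forall.1 hne) (hT T le_rfl).2 hS
      (fun t ht ↦ (hT t ht.1).1) fun z hz ↦ by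
        simpa [mem_sphere_zero_iff_norm.1 hz] using
          log_le_of_le_mul_pow_mul_exp hC hR (norm_nonneg z) (norm_nonneg _) (hbound z)
  obtain ⟨S, hS, hST⟩ := ((eventually_add_mul_log_add_mul_lt_mul (|log C| - log c + b * T) N
    hRb).and (eventually_ge_atTop T)).exists
  linarith [hjensen S hST]
end
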